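/- arXiv:2407.21473 — 9 statements merged into one kernel-verified Lean document; each statement's English description precedes it below -/
import Mathlib

section
/- Let g ≥ 3 and let H = (h_{i,j}) be a generalized Hadamard matrix GH(g,λ) over ℤ_g, and let ζ be a primitive g-th root of unity in ℂ. Then the matrix S = (ζ^{h_{i,j}}) satisfies S S* = gλ·I, all entries of S have modulus 1, and for all distinct rows k, ℓ, the vectors of entrywise squares (ζ^{2h_{k,j}})_j and (ζ^{2h_{ℓ,j}})_j are orthogonal; i.e., S is an S-Hadamard matrix. -/
/-!
Writing `ψ a = ζ ^ a.val`, `ψ` is an additive character of `ℤ_g`, and `S i c * conj (S j c)`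
is `ψ (H i c - H j c)`. The GH property says the differences `H i c - H j c` run over `ℤ_g`
exactly `λ` times each, so for `i ≠ j` the sum is `λ ∑ₐ ψ a = 0`. The squared rows are the same
computation for the character `ψ²`, still nontrivial because `ζ² ≠ 1` when `g ≥ 3`.
-/

open Finset ComplexConjugate

namespace AddChar

variable {G ι : Type*} [AddCommGroup G] [Fintype G] [Fintype ι]

lemma sum_apply_comp_eq_zero [DecidableEq G] {ψ : AddChar G ℂ} (hψ : ψ ≠ 1) {f : ι → G}
    {lam : ℕ} (hf : ∀ a, #{c | f c = a} = lam) : ∑ c, ψ (f c) = 0 := by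
  calc ∑ c, ψ (f c) = ∑ a, ∑ c with f c = a, ψ (f c) := (sum_fiberwise _ _ _).symm
    _ = ∑ a, (lam : ℂ) * ψ a := by
        refine sum_congr rfl fun a _ => ?_
        rw [sum_congr rfl fun c hc => by rw [(mem_filter.mp hc).2], sum_const, hf, nsmul_eq_mul]
    _ = 0 := by rw [← mul_sum, sum_eq_zero_of_ne_one hψ, mul_zero]

lemma mul_conj_apply (ψ : AddChar G ℂ) (a b : G) : ψ a * conj (ψ b) = ψ (a - b) := by
  rw [sub_eq_add_neg, map_add_eq_mul, map_neg_eq_conj]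

lemma mul_conj_apply_self (ψ : AddChar G ℂ) (a : G) : ψ a * conj (ψ a) = 1 := by
  rw [mul_conj_apply, sub_self, map_zero_eq_one]

lemma sum_mul_conj_eq_zero [DecidableEq G] {ψ : AddChar G ℂ} (hψ : ψ ≠ 1) {u v : ι → G}
    {lam : ℕ} (huv : ∀ a, #{c | u c - v c = a} = lam) :
    ∑ c, ψ (u c) * conj (ψ (v c)) = 0 := by
  simp only [mul_conj_apply]
  exact sum_apply_comp_eq_zero hψ huv

lemma zmodChar_pow_ne_one {g : ℕ} [NeZero g] {ζ : ℂ} (hζ : IsPrimitiveRoot ζ g) {k : ℕ}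
    (hk : k ≠ 0) (hkg : k < g) : zmodChar g hζ.pow_eq_one ^ k ≠ 1 := by
  rw [zmod_char_ne_one_iff, pow_apply, zmodChar_apply, ZMod.val_one'' (by omega), pow_one]
  exact hζ.pow_ne_one_of_pos_of_lt hk hkg

end AddChar

open AddChar in
/-- From a generalized Hadamard matrix `GH(g,λ)` over `ℤ_g` (`g ≥ 3`) and a
primitive `g`-th root of unity `ζ`, the matrix `S = (ζ^{h_{i,j}})` is an
S-Hadamard matrix: `S S* = gλ·I`, all entries have modulus `1`, and the
entrywise squares of distinct rows are orthogonal. -/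
theorem sHadamard_of_genHadamard (g lam : ℕ) (hg : 3 ≤ g)
    (H : Fin (g * lam) → Fin (g * lam) → ZMod g)
    (hGH : ∀ i j : Fin (g * lam), i ≠ j → ∀ a : ZMod g,
      (Finset.univ.filter (fun c => H i c - H j c = a)).card = lam)
    (ζ : ℂ) (hζ : IsPrimitiveRoot ζ g)
    (S : Fin (g * lam) → Fin (g * lam) → ℂ)
    (hS : ∀ i j, S i j = ζ ^ (H i j).val) :
    (∀ i j : Fin (g * lam),
        ∑ c, S i c * (starRingEnd ℂ) (S j c) =
          if i = j then ((g * lam : ℕ) : ℂ) else 0) ∧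
    (∀ i j, ‖S i j‖ = 1) ∧
    (∀ k l : Fin (g * lam), k ≠ l →
        ∑ c, (S k c) ^ 2 * (starRingEnd ℂ) ((S l c) ^ 2) = 0) := by
  have : NeZero g := ⟨by omega⟩
  set ψ := zmodChar g hζ.pow_eq_one
  have hSψ : ∀ i j, S i j = ψ (H i j) := hS
  have hψ : ψ ≠ 1 := by simpa using zmodChar_pow_ne_one hζ one_ne_zero (by omega)
  have hψ2 : ψ ^ 2 ≠ 1 := zmodChar_pow_ne_one hζ two_ne_zero (by omega)
  refine ⟨fun i j => ?_, fun i j => by simp [hSψ], fun k l hkl => ?_⟩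
  · split_ifs with hij
    · simp [hSψ, hij, mul_conj_apply_self]
    · simpa [hSψ] using sum_mul_conj_eq_zero hψ (hGH i j hij)
  · simpa [hSψ] using sum_mul_conj_eq_zero hψ2 (hGH k l hkl)
end

section
/- Let q be an odd prime power, c a non-square element of GF(q), and define the 2q × 2q block matrix D = [[A₁, A₂],[A₃, A₄]] over the additive group of GF(q), where A₁[x,y] = xy + x²/4, A₂[x,y] = xy + c x²/4, A₃[x,y] = xy − y² − x²/4, A₄[x,y] = (xy − y² − x²/4)/c, for x,y ranging over GF(q). Then for every pair of distinct rows of D, the entrywise difference contains each element of GF(q) exactly twice; i.e., D is a generalized Hadamard matrix GH(q,2) over the additive group of GF(q). -/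
/-!
Fix two distinct rows and split the columns into the two blocks. If both rows lie in the same
block row, then on each column block the difference is an affine function of the column index
with nonzero slope, so each block contributes exactly one solution. If the rows lie in different
block rows, completing the square turns the equations on the two column blocks into
`(y + s₁)² = t` and `(y + s₂)² = c t` for a common `t`; since `c` is a non-square, the numbers
of square roots of `t` and of `c t` add up to `(1 + χ(t)) + (1 - χ(t)) = 2`, `χ` the quadratic
character.
-/

open Finset

section

variable {F : Type*} [Field F] [Fintype F] [DecidableEq F]

omit [DecidableEq F] in
lemma ringChar_ne_two_of_odd_card (hodd : Odd (Fintype.card F)) : ringChar F ≠ 2 := fun h => by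
  have := FiniteField.even_card_iff_char_two.mp h
  rw [Nat.odd_iff] at hodd
  omega

omit [Field F] [DecidableEq F] in
lemma card_filter_bool_prod (p : Bool × F → Prop) [DecidablePred p] :
    #{col | p col} = #{y | p (false, y)} + #{y | p (true, y)} := by
  simp only [card_filter]
  rw [Fintype.sum_prod_type, Fintype.sum_bool, add_comm]

lemma card_filter_eq_of_affine {f : F → F} {m : F} (hm : m ≠ 0)
    (hf : ∀ y z, f y - f z = m * (y - z)) (a : F) : #{y | f y = a} = 1 := by
  rw [card_eq_one]
  refine ⟨(a - f 0) / m, ?_⟩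
  ext y
  simp only [mem_filter, mem_univ, true_and, mem_singleton, eq_div_iff hm]
  exact ⟨fun h => by linear_combination h - hf y 0, fun h => by linear_combination h + hf y 0⟩

lemma card_filter_add_sq_eq (s t : F) : #{y | (y + s) ^ 2 = t} = #{u | u ^ 2 = t} :=
  card_nbij' (· + s) (· - s) (fun _ hy => by simpa using hy) (fun _ hu => by simpa using hu)
    (fun _ _ => by simp) (fun _ _ => by simp)

lemma card_filter_sq_eq_add_card_filter_sq_eq_mul {c : F} (hc : ¬IsSquare c)
    (hF : ringChar F ≠ 2) (t : F) : #{u | u ^ 2 = t} + #{u | u ^ 2 = c * t} = 2 := by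
  have hroots (a : F) : (#{u | u ^ 2 = a} : ℤ) = quadraticChar F a + 1 := by
    rw [← quadraticChar_card_sqrts hF a, Set.toFinset_ofPred]
  have hχc : quadraticChar F c = -1 := quadraticChar_neg_one_iff_not_isSquare.mpr hc
  have : (#{u | u ^ 2 = t} : ℤ) + #{u | u ^ 2 = c * t} = 2 := by
    rw [hroots, hroots, map_mul, hχc]
    ring
  exact_mod_cast this

lemma card_filter_eq_add_card_filter_eq_of_completed_squares {c : F} (hc : ¬IsSquare c)
    (hF : ringChar F ≠ 2) {f g : F → F} {k l s₁ s₂ t a : F} (hk : k ≠ 0) (hl : l ≠ 0)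
    (hf : ∀ y, f y - a = k * ((y + s₁) ^ 2 - t))
    (hg : ∀ y, g y - a = l * ((y + s₂) ^ 2 - c * t)) :
    #{y | f y = a} + #{y | g y = a} = 2 := by
  have hf' (y : F) : f y = a ↔ (y + s₁) ^ 2 = t := by
    rw [← sub_eq_zero, hf, mul_eq_zero, or_iff_right hk, sub_eq_zero]
  have hg' (y : F) : g y = a ↔ (y + s₂) ^ 2 = c * t := by
    rw [← sub_eq_zero, hg, mul_eq_zero, or_iff_right hl, sub_eq_zero]
  simp only [hf', hg', card_filter_add_sq_eq]
  exact card_filter_sq_eq_add_card_filter_sq_eq_mul hc hF t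

end

/-- Jungnickel's construction: for a finite field `F` of odd order `q` and a
non-square `c ∈ F`, the `2q × 2q` block matrix `D = [[A₁,A₂],[A₃,A₄]]` with
`A₁[x,y] = xy + x²/4`, `A₂[x,y] = xy + cx²/4`, `A₃[x,y] = xy − y² − x²/4`,
`A₄[x,y] = (xy − y² − x²/4)/c` is a generalized Hadamard matrix `GH(q,2)` over
the additive group of `F`: in the entrywise difference of any two distinct rows,
every element of `F` appears exactly twice. -/
theorem jungnickel_genHadamard (F : Type*) [Field F] [Fintype F] [DecidableEq F]
    (hodd : Odd (Fintype.card F))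
    (c : F) (hc : ¬ ∃ b : F, b ^ 2 = c)
    (D : Bool × F → Bool × F → F)
    (hD1 : ∀ x y : F, D (false, x) (false, y) = x * y + x ^ 2 / 4)
    (hD2 : ∀ x y : F, D (false, x) (true, y) = x * y + c * x ^ 2 / 4)
    (hD3 : ∀ x y : F, D (true, x) (false, y) = x * y - y ^ 2 - x ^ 2 / 4)
    (hD4 : ∀ x y : F, D (true, x) (true, y) = (x * y - y ^ 2 - x ^ 2 / 4) / c) :
    ∀ r s : Bool × F, r ≠ s → ∀ a : F,
      (Finset.univ.filter (fun col : Bool × F => D r col - D s col = a)).card = 2 := by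
  have hF := ringChar_ne_two_of_odd_card hodd
  have h2 : (2 : F) ≠ 0 := Ring.two_ne_zero hF
  have h4 : (4 : F) ≠ 0 := by simpa [show (4 : F) = 2 ^ 2 by norm_num] using h2
  have hc : ¬IsSquare c := fun ⟨b, hb⟩ => hc ⟨b, by rw [hb, sq]⟩
  have hc0 : c ≠ 0 := fun h => hc (h ▸ IsSquare.zero)
  rintro ⟨_ | _, x₁⟩ ⟨_ | _, x₂⟩ hne a <;> rw [card_filter_bool_prod]
  · have hx : x₁ - x₂ ≠ 0 := sub_ne_zero.mpr (by simpa using hne)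
    rw [card_filter_eq_of_affine hx (fun y z => by simp only [hD1]; ring),
      card_filter_eq_of_affine hx (fun y z => by simp only [hD2]; ring)]
  · refine card_filter_eq_add_card_filter_eq_of_completed_squares hc hF one_ne_zero
      (inv_ne_zero hc0) (s₁ := (x₁ - x₂) / 2) (s₂ := (c * x₁ - x₂) / 2)
      (t := a - x₁ * x₂ / 2) (fun y => ?_) (fun y => ?_)
    · rw [hD1, hD3]; field_simp; ring
    · rw [hD2, hD4]; field_simp; ring
  · refine card_filter_eq_add_card_filter_eq_of_completed_squares hc hF
      (neg_ne_zero.mpr one_ne_zero) (neg_ne_zero.mpr (inv_ne_zero hc0))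
      (s₁ := (x₂ - x₁) / 2) (s₂ := (c * x₂ - x₁) / 2)
      (t := -a - x₁ * x₂ / 2) (fun y => ?_) (fun y => ?_)
    · rw [hD3, hD1]; field_simp; ring
    · rw [hD4, hD2]; field_simp; ring
  · have hx : x₁ - x₂ ≠ 0 := sub_ne_zero.mpr (by simpa using hne)
    rw [card_filter_eq_of_affine hx (fun y z => by simp only [hD3]; ring),
      card_filter_eq_of_affine (div_ne_zero hx hc0) (fun y z => by simp only [hD4]; ring)]
end

section
/- The Kronecker product of a generalized Hadamard matrix GH(g, λ₁) over an abelian group G with a generalized Hadamard matrix GH(g, λ₂) over G (with 'product' of entries taken as the group operation) is a generalized Hadamard matrix GH(g, g·λ₁·λ₂) over G. -/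
/-- The Kronecker product (with entrywise group addition) of a `GH(g,λ₁)` and a
`GH(g,λ₂)` over an abelian group `G` of order `g` is a `GH(g, g·λ₁·λ₂)`. -/
theorem kronecker_genHadamard (G : Type*) [AddCommGroup G] [Fintype G] [DecidableEq G]
    (g lam₁ lam₂ : ℕ) (hg : Fintype.card G = g)
    (A : Fin (g * lam₁) → Fin (g * lam₁) → G)
    (B : Fin (g * lam₂) → Fin (g * lam₂) → G)
    (hA : ∀ i j : Fin (g * lam₁), i ≠ j → ∀ a : G,
      (Finset.univ.filter (fun c => A i c - A j c = a)).card = lam₁)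
    (hB : ∀ i j : Fin (g * lam₂), i ≠ j → ∀ a : G,
      (Finset.univ.filter (fun c => B i c - B j c = a)).card = lam₂)
    (K : (Fin (g * lam₁) × Fin (g * lam₂)) → (Fin (g * lam₁) × Fin (g * lam₂)) → G)
    (hK : ∀ r c, K r c = A r.1 c.1 + B r.2 c.2) :
    ∀ r s : Fin (g * lam₁) × Fin (g * lam₂), r ≠ s → ∀ a : G,
      (Finset.univ.filter
        (fun c : Fin (g * lam₁) × Fin (g * lam₂) => K r c - K s c = a)).card
        = g * lam₁ * lam₂ := by
  rintro ⟨r1, r2⟩ ⟨s1, s2⟩ hrs a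
  simp only [hK]
  by_cases h1 : r1 = s1
  · subst h1
    have h2 : r2 ≠ s2 := by
      intro h; exact hrs (by rw [h])
    have hcond : ∀ c1 : Fin (g * lam₁), ∀ c2 : Fin (g * lam₂),
        ((A r1 c1 + B r2 c2) - (A r1 c1 + B s2 c2) = a ↔ B r2 c2 - B s2 c2 = a) := by
      intro c1 c2
      constructor <;> intro h <;> rw [← h] <;> abel
    rw [Finset.card_filter, Fintype.sum_prod_type]
    simp only [hcond]
    have : (∑ c2 : Fin (g * lam₂), if B r2 c2 - B s2 c2 = a then 1 else 0) = lam₂ := by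
      rw [← Finset.card_filter]
      exact hB r2 s2 h2 a
    simp only [this, Finset.sum_const, Finset.card_univ, Fintype.card_fin, smul_eq_mul]
  · have hcond : ∀ c1 : Fin (g * lam₁), ∀ c2 : Fin (g * lam₂),
        ((A r1 c1 + B r2 c2) - (A s1 c1 + B s2 c2) = a ↔
          A r1 c1 - A s1 c1 = a - (B r2 c2 - B s2 c2)) := by
      intro c1 c2
      constructor <;> intro h
      · rw [← h]; abel
      · rw [eq_sub_iff_add_eq] at h; rw [← h]; abel
    rw [Finset.card_filter, Fintype.sum_prod_type_right]
    simp only [hcond]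
    have : ∀ c2 : Fin (g * lam₂),
        (∑ c1 : Fin (g * lam₁),
          if A r1 c1 - A s1 c1 = a - (B r2 c2 - B s2 c2) then 1 else 0) = lam₁ := by
      intro c2
      rw [← Finset.card_filter]
      exact hA r1 s1 h1 _
    simp only [this, Finset.sum_const, Finset.card_univ, Fintype.card_fin, smul_eq_mul]
    ring
end

section
/- Let H be a normalized S-Hadamard matrix of order n with rows h₁,...,h_n (h₁ the all-ones vector). Define vectors v^{1,s} = h_{s−1} for s = 2,...,n+1, v^{2,s} = h_{s−1} ∘ h_{s−1} for s = 3,...,n+1, and v^{r,s} = h_{r−1} ∘ h_{s−1} for 3 ≤ r < s ≤ n+1, where ∘ is the entrywise product. Then for each r ∈ {1,...,n+1}, the set B_r = {v^{r,i} : i ≠ r, 1 ≤ i ≤ n+1} consists of n pairwise orthogonal vectors in ℂⁿ. -/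
/-!
Since the first row is all ones, `B_1 = {h_k}`, `B_2 = {h_k ∘ h_k}` and, for `r ≥ 3`,
`B_r = {h_{r-1} ∘ h_k}`, with `k` running over all `n` rows in each case. The first two
families are orthogonal by the definition of an S-Hadamard matrix, and the third because
multiplying entrywise by a vector of unimodular entries does not change Hermitian products.
-/

/-- The vectors `v^{r,s}` built from the rows of an S-Hadamard matrix.
Indices `r, s` are 1-based (running over `1, …, n+1`), while `h k` for
`0 ≤ k ≤ n-1` denotes the `(k+1)`-st row of the matrix, so the paper's row
`h_s` is `h (s-1)`.  `v^{1,s} = h_{s-1}`, `v^{2,s} = h_{s-1} ∘ h_{s-1}`, and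
`v^{r,s} = h_{r-1} ∘ h_{s-1}` for `3 ≤ r < s`; the definition is symmetrized
via `min`/`max`. -/
noncomputable def starVec (n : ℕ) (h : ℕ → Fin n → ℂ) (r s : ℕ) : Fin n → ℂ :=
  let a := min r s
  let b := max r s
  if a = 1 then h (b - 2)
  else if a = 2 then fun j => h (b - 2) j * h (b - 2) j
  else fun j => h (a - 2) j * h (b - 2) j

theorem sum_mul_mul_conj_of_norm_eq_one {ι : Type*} [Fintype ι] (u x y : ι → ℂ)
    (hu : ∀ j, ‖u j‖ = 1) :
    ∑ j, u j * x j * (starRingEnd ℂ) (u j * y j) = ∑ j, x j * (starRingEnd ℂ) (y j) := by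
  refine Finset.sum_congr rfl fun j _ => ?_
  calc u j * x j * (starRingEnd ℂ) (u j * y j)
      = u j * (starRingEnd ℂ) (u j) * (x j * (starRingEnd ℂ) (y j)) := by rw [map_mul]; ring
    _ = x j * (starRingEnd ℂ) (y j) := by rw [Complex.mul_conj', hu j]; simp

/-- The family `B_r`, indexed by rows `k`. For `r = 1` the factor `h (r - 2) = h 0` is the
all-ones row, thanks to truncated subtraction. -/
noncomputable def starFamily (n : ℕ) (h : ℕ → Fin n → ℂ) (r k : ℕ) : Fin n → ℂ :=
  if r = 2 then fun j => h k j ^ 2 else fun j => h (r - 2) j * h k j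

def starIndex (r i : ℕ) : ℕ :=
  if i = 1 then 0 else if i = 2 then r - 2 else i - 2

theorem starIndex_lt {n r i : ℕ} (hr : 1 ≤ r) (hr' : r ≤ n + 1) (hi : 1 ≤ i) (hi' : i ≤ n + 1)
    (hir : i ≠ r) : starIndex r i < n := by
  unfold starIndex; split_ifs <;> omega

theorem starIndex_injOn {r i i' : ℕ} (hr : 1 ≤ r) (hi : 1 ≤ i) (hi' : 1 ≤ i') (hir : i ≠ r)
    (hi'r : i' ≠ r) (h : starIndex r i = starIndex r i') : i = i' := by
  unfold starIndex at h; split_ifs at h <;> omega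

theorem starVec_eq_starFamily {n : ℕ} {h : ℕ → Fin n → ℂ} (hnorm : ∀ j, h 0 j = 1)
    {r i : ℕ} (hr : 1 ≤ r) (hi : 1 ≤ i) (hir : i ≠ r) :
    starVec n h r i = starFamily n h r (starIndex r i) := by
  funext j
  simp only [starVec, starFamily, starIndex, min_def, max_def]
  split_ifs <;> first | omega | (subst_vars; simp [hnorm, sq, mul_comm])

theorem starFamily_orthogonal {n : ℕ} {h : ℕ → Fin n → ℂ}
    (hrow : ∀ k l : ℕ, k < n → l < n →
      ∑ j, h k j * (starRingEnd ℂ) (h l j) = if k = l then (n : ℂ) else 0)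
    (habs : ∀ k : ℕ, k < n → ∀ j, ‖h k j‖ = 1)
    (hsq : ∀ k l : ℕ, k < n → l < n → k ≠ l →
      ∑ j, (h k j) ^ 2 * (starRingEnd ℂ) ((h l j) ^ 2) = 0)
    {r k l : ℕ} (hr : r ≤ n + 1) (hk : k < n) (hl : l < n) (hkl : k ≠ l) :
    ∑ j, starFamily n h r k j * (starRingEnd ℂ) (starFamily n h r l j) = 0 := by
  unfold starFamily
  split_ifs
  · exact hsq k l hk hl hkl
  · rw [sum_mul_mul_conj_of_norm_eq_one _ _ _ (habs _ (by omega)), hrow k l hk hl, if_neg hkl]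

/-- For a normalized S-Hadamard matrix of order `n` with rows `h 0, …, h (n-1)`
(the first row being all ones), for each `r ∈ {1,…,n+1}` the `n` vectors
`{v^{r,i} : i ≠ r}` are pairwise orthogonal in `ℂⁿ`. -/
theorem starVec_pairwise_orthogonal (n : ℕ) (h : ℕ → Fin n → ℂ)
    (hnorm : ∀ j, h 0 j = 1)
    (hrow : ∀ k l : ℕ, k < n → l < n →
      ∑ j, h k j * (starRingEnd ℂ) (h l j) = if k = l then (n : ℂ) else 0)
    (habs : ∀ k : ℕ, k < n → ∀ j, ‖h k j‖ = 1)
    (hsq : ∀ k l : ℕ, k < n → l < n → k ≠ l →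
      ∑ j, (h k j) ^ 2 * (starRingEnd ℂ) ((h l j) ^ 2) = 0) :
    ∀ r ∈ Finset.Icc 1 (n + 1), ∀ i ∈ Finset.Icc 1 (n + 1),
      ∀ i' ∈ Finset.Icc 1 (n + 1), i ≠ r → i' ≠ r → i ≠ i' →
        ∑ j, starVec n h r i j * (starRingEnd ℂ) (starVec n h r i' j) = 0 := by
  intro r hr i hi i' hi' hir hi'r hii'
  simp only [Finset.mem_Icc] at hr hi hi'
  rw [starVec_eq_starFamily hnorm hr.1 hi.1 hir, starVec_eq_starFamily hnorm hr.1 hi'.1 hi'r]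
  exact starFamily_orthogonal hrow habs hsq hr.2
    (starIndex_lt hr.1 hr.2 hi.1 hi.2 hir) (starIndex_lt hr.1 hr.2 hi'.1 hi'.2 hi'r)
    (fun he => hii' (starIndex_injOn hr.1 hi.1 hi'.1 hir hi'r he))
end

section
/- If there exists a resolvable (N, k, 1)-BIBD with k odd and the Johnson graph J(k,2) has an orthogonal representation in ℂ^{k−1}, then the Johnson graph J(N,2) has an orthogonal representation in ℂ^{N−1}. -/
open scoped BigOperators

/-- The Johnson graph `J(N,2)`. -/
def JohnsonGraph (N : ℕ) : SimpleGraph {s : Finset (Fin N) // s.card = 2} where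
  Adj a b := a ≠ b ∧ ¬ Disjoint a.1 b.1
  symm := by
    constructor
    intro a b h
    exact ⟨h.1.symm, fun hd => h.2 hd.symm⟩
  loopless := by
    constructor
    intro a h
    exact h.1 rfl

/-- `G` has an orthogonal representation in `ℂ^d`. -/
def HasOrthRep {V : Type*} (G : SimpleGraph V) (d : ℕ) : Prop :=
  ∃ f : V → (Fin d → ℂ), (∀ v, f v ≠ 0) ∧
    ∀ u v, G.Adj u v → ∑ j, (starRingEnd ℂ) (f u j) * f v j = 0

/-!
Fix a point `p`. The blocks through `p`, one in each parallel class, partition the other `N - 1`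
points into `m` sets of size `k - 1`, so `N - 1 = m (k - 1)`. Index `ℂ^{N-1}` by pairs (class,
coordinate of `ℂ^{k-1}`). A pair `a` of points lies in a block `B` of some class `i`; represent `a`
by the vector of `a` in the given representation of `J(k,2) ≅ J(B,2)`, placed in the `i`-th slot.
Intersecting pairs in different classes get vectors with disjoint supports, and intersecting pairs
in the same class lie in the same block, where the representation of `J(k,2)` makes them orthogonal.
-/

open Finset ComplexConjugate

theorem HasOrthRep.of_blockwise {V ι : Type*} [Fintype ι] [DecidableEq ι] {G : SimpleGraph V}
    {d : ℕ} (cls : V → ι) (g : V → Fin d → ℂ) (hg : ∀ v, g v ≠ 0)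
    (horth : ∀ u v, G.Adj u v → cls u = cls v → ∑ j, conj (g u j) * g v j = 0) :
    HasOrthRep G (Fintype.card ι * d) := by
  let e : ι × Fin d ≃ Fin (Fintype.card ι * d) := Fintype.equivFinOfCardEq (by simp)
  let f (v : V) (p : ι × Fin d) : ℂ := (Pi.single (cls v) (g v) : ι → Fin d → ℂ) p.1 p.2
  refine ⟨fun v x => f v (e.symm x), fun v hv => ?_, fun u v huv => ?_⟩
  · obtain ⟨j, hj⟩ := Function.ne_iff.mp (hg v)
    exact hj (by simpa [f] using congrFun hv (e (cls v, j)))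
  · rw [e.symm.sum_comp (fun p => conj (f u p) * f v p), Fintype.sum_prod_type,
      sum_eq_single (cls u) (fun i _ hi => by simp [f, Pi.single_eq_of_ne hi]) (by simp)]
    by_cases hcls : cls u = cls v
    · simpa [f, hcls] using horth u v huv hcls
    · simp [f, Pi.single_eq_of_ne hcls]

def JohnsonGraph.map {k N : ℕ} (φ : Fin k ↪ Fin N) : JohnsonGraph k ↪g JohnsonGraph N where
  toFun s := ⟨s.1.map φ, by rw [card_map, s.2]⟩
  inj' s t h := Subtype.ext (map_injective φ (congrArg Subtype.val h))
  map_rel_iff' {s t} := by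
    simp only [JohnsonGraph, ne_eq, Subtype.ext_iff]
    change ¬s.1.map φ = t.1.map φ ∧ ¬Disjoint (s.1.map φ) (t.1.map φ) ↔ _
    rw [map_inj, disjoint_map]

theorem exists_orthRep_on_block {k N d : ℕ} (hrep : HasOrthRep (JohnsonGraph k) d)
    {B : Finset (Fin N)} (hB : B.card = k) :
    ∃ r : {s : Finset (Fin N) // s.card = 2} → Fin d → ℂ, (∀ a, a.1 ⊆ B → r a ≠ 0) ∧
      ∀ a b, a.1 ⊆ B → b.1 ⊆ B → (JohnsonGraph N).Adj a b → ∑ j, conj (r a j) * r b j = 0 := by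
  classical
  obtain ⟨g, hg0, hg⟩ := hrep
  let Φ := JohnsonGraph.map (B.orderEmbOfFin hB).toEmbedding
  have hΦ : ∀ a : {s : Finset (Fin N) // s.card = 2}, a.1 ⊆ B → ∃ s, Φ s = a := by
    intro a ha
    rw [← map_orderEmbOfFin_univ B hB, subset_map_iff] at ha
    obtain ⟨s, -, hs⟩ := ha
    exact ⟨⟨s, by rw [← card_map, ← hs, a.2]⟩, Subtype.ext hs.symm⟩
  refine ⟨fun a => if h : ∃ s, Φ s = a then g h.choose else 0, fun a ha => ?_,
    fun a b ha hb hab => ?_⟩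
  · dsimp only
    rw [dif_pos (hΦ a ha)]
    exact hg0 _
  · dsimp only
    rw [dif_pos (hΦ a ha), dif_pos (hΦ b hb)]
    refine hg _ _ (Φ.map_adj_iff.mp ?_)
    rwa [(hΦ a ha).choose_spec, (hΦ b hb).choose_spec]

/-- `t i` is the `i`-th parallel class; the last field says `λ = 1`. -/
structure IsResolvableDesign {α ι : Type*} (k : ℕ) (t : ι → Finset (Finset α)) : Prop where
  card_eq : ∀ i, ∀ B ∈ t i, B.card = k
  existsUnique_mem : ∀ i, ∀ p : α, ∃! B, B ∈ t i ∧ p ∈ B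
  existsUnique_of_ne : ∀ p q : α, p ≠ q → ∃! ib : ι × Finset α, ib.2 ∈ t ib.1 ∧ p ∈ ib.2 ∧ q ∈ ib.2

namespace IsResolvableDesign

variable {α ι : Type*} {k : ℕ} {t : ι → Finset (Finset α)}

theorem eq_of_mem_of_mem (hD : IsResolvableDesign k t) {i : ι} {B B' : Finset α} {p : α}
    (hB : B ∈ t i) (hB' : B' ∈ t i) (hp : p ∈ B) (hp' : p ∈ B') : B = B' :=
  (hD.existsUnique_mem i p).unique ⟨hB, hp⟩ ⟨hB', hp'⟩

theorem exists_superset_of_card_eq_two (hD : IsResolvableDesign k t) {s : Finset α}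
    (hs : s.card = 2) : ∃ i, ∃ B ∈ t i, s ⊆ B := by
  classical
  obtain ⟨p, q, hpq, rfl⟩ := card_eq_two.mp hs
  obtain ⟨⟨i, B⟩, ⟨hB, hp, hq⟩, -⟩ := hD.existsUnique_of_ne p q hpq
  exact ⟨i, B, hB, insert_subset hp (singleton_subset_iff.mpr hq)⟩

theorem card_sub_one_eq [Fintype α] [DecidableEq α] [Fintype ι] (hD : IsResolvableDesign k t)
    (p : α) : Fintype.card α - 1 = Fintype.card ι * (k - 1) := by
  choose B hB hpB using fun i => (hD.existsUnique_mem i p).exists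
  have hdisj : ((univ : Finset ι) : Set ι).PairwiseDisjoint fun i => (B i).erase p := by
    intro i _ i' _ hii'
    refine disjoint_left.mpr fun q (hq : q ∈ (B i).erase p) (hq' : q ∈ (B i').erase p) => hii' ?_
    have hqp := ne_of_mem_erase hq
    exact congrArg Prod.fst <| (hD.existsUnique_of_ne p q hqp.symm).unique
      (y₁ := (i, B i)) (y₂ := (i', B i'))
      ⟨hB i, hpB i, mem_of_mem_erase hq⟩ ⟨hB i', hpB i', mem_of_mem_erase hq'⟩
  have hcover : univ.biUnion (fun i => (B i).erase p) = univ.erase p := by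
    ext q
    simp only [mem_biUnion, mem_erase, mem_univ, true_and, and_true]
    refine ⟨fun ⟨_, hqp, _⟩ => hqp, fun hqp => ?_⟩
    obtain ⟨⟨i, B'⟩, ⟨hB', hp, hq⟩, -⟩ := hD.existsUnique_of_ne p q (Ne.symm hqp)
    exact ⟨i, hqp, hD.eq_of_mem_of_mem hB' (hB i) hp (hpB i) ▸ hq⟩
  have hcard := card_biUnion hdisj
  rw [hcover, card_erase_of_mem (mem_univ p), card_univ] at hcard
  simp_rw [card_erase_of_mem (hpB _), hD.card_eq _ _ (hB _)] at hcard
  simpa using hcard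

end IsResolvableDesign

theorem johnson_orthRep_of_rbibd_general (N k m : ℕ)
    (t : Fin m → Finset (Finset (Fin N)))
    (hblock : ∀ i, ∀ B ∈ t i, B.card = k)
    (hres : ∀ i, ∀ p : Fin N, ∃! B, B ∈ t i ∧ p ∈ B)
    (hpair : ∀ p q : Fin N, p ≠ q →
      ∃! ib : Fin m × Finset (Fin N), ib.2 ∈ t ib.1 ∧ p ∈ ib.2 ∧ q ∈ ib.2)
    (hrep : HasOrthRep (JohnsonGraph k) (k - 1)) :
    HasOrthRep (JohnsonGraph N) (N - 1) := by
  classical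
  obtain hV | hV := isEmpty_or_nonempty {s : Finset (Fin N) // s.card = 2}
  · exact ⟨isEmptyElim, isEmptyElim, fun u => isEmptyElim u⟩
  obtain ⟨s, hs⟩ := hV
  obtain ⟨p, -⟩ := card_pos.mp (hs ▸ two_pos)
  have hD : IsResolvableDesign k t := ⟨hblock, hres, hpair⟩
  choose! r hr0 hrorth using
    fun (B : Finset (Fin N)) (hB : B.card = k) => exists_orthRep_on_block hrep hB
  choose cls blk hblk hsub using fun a : {s : Finset (Fin N) // s.card = 2} =>
    hD.exists_superset_of_card_eq_two a.2
  have hrep' : HasOrthRep (JohnsonGraph N) (Fintype.card (Fin m) * (k - 1)) :=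
    HasOrthRep.of_blockwise cls (fun a => r (blk a) a)
      (fun a => hr0 _ (hblock _ _ (hblk a)) a (hsub a)) fun a b hab hcls => by
      obtain ⟨x, hxa, hxb⟩ := not_disjoint_iff.mp hab.2
      have hblk_eq : blk b = blk a :=
        hD.eq_of_mem_of_mem (hcls ▸ hblk b) (hblk a) (hsub b hxb) (hsub a hxa)
      rw [hblk_eq]
      exact hrorth _ (hblock _ _ (hblk a)) a b (hsub a) (hblk_eq ▸ hsub b) hab
  rwa [← hD.card_sub_one_eq p, Fintype.card_fin] at hrep'

/-- If there exists a resolvable `(N,k,1)`-BIBD with `k` odd and `J(k,2)` has an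
orthogonal representation in `ℂ^{k-1}`, then `J(N,2)` has an orthogonal
representation in `ℂ^{N-1}`. -/
theorem johnson_orthRep_of_rbibd (N k m : ℕ) (hk : Odd k)
    (t : Fin m → Finset (Finset (Fin N)))
    (hblock : ∀ i, ∀ B ∈ t i, B.card = k)
    (hres : ∀ i, ∀ p : Fin N, ∃! B, B ∈ t i ∧ p ∈ B)
    (hpair : ∀ p q : Fin N, p ≠ q →
      ∃! ib : Fin m × Finset (Fin N), ib.2 ∈ t ib.1 ∧ p ∈ ib.2 ∧ q ∈ ib.2)
    (hrep : HasOrthRep (JohnsonGraph k) (k - 1)) :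
    HasOrthRep (JohnsonGraph N) (N - 1) :=
  johnson_orthRep_of_rbibd_general N k m t hblock hres hpair hrep
end

section
/- In the colored odd-pointed star game on the J(N,2)-configuration with N odd, N ≥ 5: for any assignment where Alice receives lines {1,...,N−2} and Bob receives lines {3,...,N}, there is no perfect classical strategy; i.e., there do not exist functions F: {1,...,N−2} → points and G: {3,...,N} → points with F(x) on line x, G(y) on line y, such that for every pair (x,y), the 2-subsets F(x) and G(y) are equal or disjoint. -/
/-- `p` is a point on line `i` of the `J(N,2)`-configuration: `p = {i,j}` for
some `j ∈ {1,…,N}` with `j ≠ i`. -/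
def PointOn (N i : ℕ) (p : Finset ℕ) : Prop :=
  ∃ j ∈ Finset.Icc 1 N, j ≠ i ∧ p = {i, j}

lemma PointOn.mem_self {N i : ℕ} {p : Finset ℕ} (h : PointOn N i p) : i ∈ p := by
  obtain ⟨j, _, _, rfl⟩ := h; simp

lemma PointOn.card_eq {N i : ℕ} {p : Finset ℕ} (h : PointOn N i p) : p.card = 2 := by
  obtain ⟨j, _, hj, rfl⟩ := h
  rw [Finset.card_insert_of_notMem (by simp [Ne.symm hj]), Finset.card_singleton]

lemma PointOn.subset_Icc {N i : ℕ} {p : Finset ℕ} (h : PointOn N i p)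
    (hi : i ∈ Finset.Icc 1 N) : p ⊆ Finset.Icc 1 N := by
  obtain ⟨j, hjm, _, rfl⟩ := h
  intro x hx
  rcases Finset.mem_insert.1 hx with rfl | hx
  · exact hi
  · rw [Finset.mem_singleton] at hx; exact hx ▸ hjm

/-- In the colored odd-pointed star game on the `J(N,2)`-configuration
(`N` odd, `N ≥ 5`), with Alice receiving lines `1,…,N-2` and Bob receiving
lines `3,…,N`, there is no perfect classical strategy: there are no functions
`F`, `G` choosing a point on each input line such that for every input pair
`(x,y)` the chosen points are equal or disjoint. -/
theorem no_perfect_classical_strategy (N : ℕ) (hN : Odd N) (hN5 : 5 ≤ N) :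
    ¬ ∃ F G : ℕ → Finset ℕ,
      (∀ x ∈ Finset.Icc 1 (N - 2), PointOn N x (F x)) ∧
      (∀ y ∈ Finset.Icc 3 N, PointOn N y (G y)) ∧
      (∀ x ∈ Finset.Icc 1 (N - 2), ∀ y ∈ Finset.Icc 3 N,
        F x = G y ∨ Disjoint (F x) (G y)) := by
  rintro ⟨F, G, hF, hG, hFG⟩
  -- shared lines agree
  have memA : ∀ i : ℕ, 1 ≤ i → i ≤ N - 2 → i ∈ Finset.Icc 1 (N - 2) := by
    intro i h1 h2; rw [Finset.mem_Icc]; exact ⟨h1, h2⟩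
  have memB : ∀ i : ℕ, 3 ≤ i → i ≤ N → i ∈ Finset.Icc 3 N := by
    intro i h1 h2; rw [Finset.mem_Icc]; exact ⟨h1, h2⟩
  have hshared : ∀ i : ℕ, 3 ≤ i → i ≤ N - 2 → F i = G i := by
    intro i h3 h2
    refine (hFG i (memA i (by omega) h2) i (memB i h3 (by omega))).resolve_right ?_
    exact Finset.not_disjoint_iff.2
      ⟨i, (hF i (memA i (by omega) h2)).mem_self, (hG i (memB i h3 (by omega))).mem_self⟩
  -- combined strategy
  set E : ℕ → Finset ℕ := fun i => if i ≤ N - 2 then F i else G i with hEdef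
  have hE : ∀ i ∈ Finset.Icc 1 N, PointOn N i (E i) := by
    intro i hi
    rw [Finset.mem_Icc] at hi
    by_cases h : i ≤ N - 2
    · simpa [hEdef, h] using hF i (memA i hi.1 h)
    · simpa [hEdef, h] using hG i (memB i (by omega) hi.2)
  -- the hard Alice-only pair
  have hAlice : F 1 = F 2 ∨ Disjoint (F 1) (F 2) := by
    by_cases hd : Disjoint (F 1) (F 2)
    · exact Or.inr hd
    left
    have h1A := memA 1 (by omega) (by omega)
    have h2A := memA 2 (by omega) (by omega)
    obtain ⟨a, haN, ha1, hFa⟩ := hF 1 h1A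
    obtain ⟨b, hbN, hb2, hFb⟩ := hF 2 h2A
    rw [Finset.mem_Icc] at haN hbN
    obtain ⟨k, hk1, hk2⟩ := Finset.not_disjoint_iff.1 hd
    rw [hFa, Finset.mem_insert, Finset.mem_singleton] at hk1
    rw [hFb, Finset.mem_insert, Finset.mem_singleton] at hk2
    rcases hk1 with hk1 | hk1 <;> rcases hk2 with hk2 | hk2
    · omega
    · -- k = 1 = b
      have hb : b = 1 := by omega
      by_cases ha2 : a = 2
      · rw [hFa, hFb, ha2, hb]; exact Finset.pair_comm 1 2
      · have haB := memB a (by omega) haN.2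
        have h1 : F 1 = G a := by
          refine (hFG 1 h1A a haB).resolve_right ?_
          exact Finset.not_disjoint_iff.2 ⟨a, by rw [hFa]; simp, (hG a haB).mem_self⟩
        have h2 : F 2 = G a := by
          refine (hFG 2 h2A a haB).resolve_right ?_
          refine Finset.not_disjoint_iff.2 ⟨1, by rw [hFb, hb]; simp, ?_⟩
          rw [← h1, hFa]; simp
        rw [h1, h2]
    · -- k = a = 2
      have ha : a = 2 := by omega
      by_cases hb1 : b = 1
      · rw [hFa, hFb, ha, hb1]; exact Finset.pair_comm 1 2
      · have hbB := memB b (by omega) hbN.2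
        have h2 : F 2 = G b := by
          refine (hFG 2 h2A b hbB).resolve_right ?_
          exact Finset.not_disjoint_iff.2 ⟨b, by rw [hFb]; simp, (hG b hbB).mem_self⟩
        have h1 : F 1 = G b := by
          refine (hFG 1 h1A b hbB).resolve_right ?_
          refine Finset.not_disjoint_iff.2 ⟨2, by rw [hFa, ha]; simp, ?_⟩
          rw [← h2, hFb]; simp
        rw [h1, h2]
    · -- k = a = b
      have hab : a = b := by omega
      have haB := memB a (by omega) haN.2
      have h1 : F 1 = G a := by
        refine (hFG 1 h1A a haB).resolve_right ?_
        exact Finset.not_disjoint_iff.2 ⟨a, by rw [hFa]; simp, (hG a haB).mem_self⟩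
      have h2 : F 2 = G a := by
        refine (hFG 2 h2A a haB).resolve_right ?_
        refine Finset.not_disjoint_iff.2 ⟨a, ?_, (hG a haB).mem_self⟩
        rw [hFb, hab]; simp
      rw [h1, h2]
  -- the hard Bob-only pair
  have hBob : G (N - 1) = G N ∨ Disjoint (G (N - 1)) (G N) := by
    by_cases hd : Disjoint (G (N - 1)) (G N)
    · exact Or.inr hd
    left
    have h1B := memB (N - 1) (by omega) (by omega)
    have h2B := memB N (by omega) (by omega)
    obtain ⟨a, haN, ha1, hGa⟩ := hG (N - 1) h1B
    obtain ⟨b, hbN, hb2, hGb⟩ := hG N h2B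
    rw [Finset.mem_Icc] at haN hbN
    obtain ⟨k, hk1, hk2⟩ := Finset.not_disjoint_iff.1 hd
    rw [hGa, Finset.mem_insert, Finset.mem_singleton] at hk1
    rw [hGb, Finset.mem_insert, Finset.mem_singleton] at hk2
    rcases hk1 with hk1 | hk1 <;> rcases hk2 with hk2 | hk2
    · omega
    · -- k = N - 1 = b
      have hb : b = N - 1 := by omega
      by_cases ha2 : a = N
      · rw [hGa, hGb, ha2, hb]; exact Finset.pair_comm (N - 1) N
      · have haA := memA a haN.1 (by omega)
        have h1 : F a = G (N - 1) := by
          refine (hFG a haA (N - 1) h1B).resolve_right ?_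
          exact Finset.not_disjoint_iff.2 ⟨a, (hF a haA).mem_self, by rw [hGa]; simp⟩
        have h2 : F a = G N := by
          refine (hFG a haA N h2B).resolve_right ?_
          refine Finset.not_disjoint_iff.2 ⟨N - 1, ?_, by rw [hGb, hb]; simp⟩
          rw [h1, hGa]; simp
        rw [← h1, h2]
    · -- k = a = N
      have ha : a = N := by omega
      by_cases hb1 : b = N - 1
      · rw [hGa, hGb, ha, hb1]; exact Finset.pair_comm (N - 1) N
      · have hbA := memA b hbN.1 (by omega)
        have h2 : F b = G N := by
          refine (hFG b hbA N h2B).resolve_right ?_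
          exact Finset.not_disjoint_iff.2 ⟨b, (hF b hbA).mem_self, by rw [hGb]; simp⟩
        have h1 : F b = G (N - 1) := by
          refine (hFG b hbA (N - 1) h1B).resolve_right ?_
          refine Finset.not_disjoint_iff.2 ⟨N, ?_, by rw [hGa, ha]; simp⟩
          rw [h2, hGb]; simp
        rw [← h1, h2]
    · -- k = a = b
      have hab : a = b := by omega
      have haA := memA a haN.1 (by omega)
      have h1 : F a = G (N - 1) := by
        refine (hFG a haA (N - 1) h1B).resolve_right ?_
        exact Finset.not_disjoint_iff.2 ⟨a, (hF a haA).mem_self, by rw [hGa]; simp⟩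
      have h2 : F a = G N := by
        refine (hFG a haA N h2B).resolve_right ?_
        refine Finset.not_disjoint_iff.2 ⟨a, (hF a haA).mem_self, ?_⟩
        rw [hGb, hab]; simp
      rw [← h1, h2]
  -- pairwise equal-or-disjoint for E
  have hElt : ∀ i j : ℕ, i ∈ Finset.Icc 1 N → j ∈ Finset.Icc 1 N → i < j →
      E i = E j ∨ Disjoint (E i) (E j) := by
    intro i j hi hj hij
    rw [Finset.mem_Icc] at hi hj
    by_cases hjA : j ≤ N - 2
    · -- both Alice
      have hiA : i ≤ N - 2 := by omega
      simp only [hEdef, if_pos hjA, if_pos hiA]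
      by_cases hj3 : 3 ≤ j
      · rw [hshared j hj3 hjA]
        exact hFG i (memA i hi.1 hiA) j (memB j hj3 (by omega))
      · -- i = 1, j = 2
        have : i = 1 ∧ j = 2 := by omega
        rw [this.1, this.2]; exact hAlice
    · by_cases hiA : i ≤ N - 2
      · -- Alice vs Bob
        simp only [hEdef, if_pos hiA, if_neg hjA]
        exact hFG i (memA i hi.1 hiA) j (memB j (by omega) hj.2)
      · -- both Bob: i = N-1, j = N
        have hij' : i = N - 1 ∧ j = N := by omega
        simp only [hEdef, hij'.1, hij'.2, if_neg (show ¬ N - 1 ≤ N - 2 by omega),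
          if_neg (show ¬ N ≤ N - 2 by omega)]
        exact hBob
  have hEpair : ∀ i ∈ Finset.Icc 1 N, ∀ j ∈ Finset.Icc 1 N, E i ≠ E j →
      Disjoint (E i) (E j) := by
    intro i hi j hj hne
    rcases lt_trichotomy i j with h | h | h
    · exact (hElt i j hi hj h).resolve_left hne
    · exact absurd (by rw [h]) hne
    · exact ((hElt j i hj hi h).resolve_left fun he => hne he.symm).symm
  -- counting
  set M : Finset (Finset ℕ) := (Finset.Icc 1 N).image E with hM
  have hcover : Finset.Icc 1 N = M.biUnion id := by
    apply Finset.Subset.antisymm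
    · intro x hx
      exact Finset.mem_biUnion.2 ⟨E x, Finset.mem_image_of_mem E hx, (hE x hx).mem_self⟩
    · intro x hx
      obtain ⟨s, hs, hxs⟩ := Finset.mem_biUnion.1 hx
      obtain ⟨i, hi, rfl⟩ := Finset.mem_image.1 hs
      exact (hE i hi).subset_Icc hi hxs
  have hdisj : ∀ s ∈ M, ∀ t ∈ M, s ≠ t → Disjoint (id s) (id t) := by
    intro s hs t ht hst
    obtain ⟨i, hi, rfl⟩ := Finset.mem_image.1 hs
    obtain ⟨j, hj, rfl⟩ := Finset.mem_image.1 ht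
    exact hEpair i hi j hj hst
  have hcard : N = ∑ s ∈ M, (id s).card := by
    rw [← Finset.card_biUnion hdisj, ← hcover, Nat.card_Icc]; omega
  have hsum : ∑ s ∈ M, (id s).card = 2 * M.card := by
    rw [Finset.sum_congr rfl (fun s hs => ?_), Finset.sum_const, smul_eq_mul, mul_comm]
    obtain ⟨i, hi, rfl⟩ := Finset.mem_image.1 hs
    exact (hE i hi).card_eq
  rw [hsum] at hcard
  obtain ⟨m, hm⟩ := hN
  omega
end

section
/- Let (V, B) be a KS set arising from an orthogonal representation of J(N,2) in dimension N−1 (N odd), with bases b_i = {v^{i,j} : j ≠ i}. If S_A ⊆ B with |S_A| ≤ N−3 and S_B = B, then a classical assignment for (S_A, S_B) exists; hence any bipartite KS set (S_A, S_B) must satisfy min(|S_A|, |S_B|) ≥ N−2. -/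
/-- A classical assignment for the pair of sets of lines (bases) `(SA, SB)` of
the `J(N,2)`-configuration: a choice of a point on each line of `SA` (for
Alice) and each line of `SB` (for Bob), such that for every line of Alice and
every line of Bob the chosen points are equal or disjoint (never intersect in
exactly one element). -/
def HasClassicalAssignment (N : ℕ) (SA SB : Finset ℕ) : Prop :=
  ∃ F G : ℕ → Finset ℕ,
    (∀ i ∈ SA, PointOn N i (F i)) ∧
    (∀ k ∈ SB, PointOn N k (G k)) ∧
    (∀ i ∈ SA, ∀ k ∈ SB, F i = G k ∨ Disjoint (F i) (G k))

/-- Partner index: pair up `2m` with `2m+1`. -/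
def pidx (n : ℕ) : ℕ := if n % 2 = 0 then n + 1 else n - 1

lemma pidx_lt {n L : ℕ} (h : n < L) (hev : 2 ∣ L) : pidx n < L := by
  unfold pidx; split <;> omega

lemma pidx_div (n : ℕ) : pidx n / 2 = n / 2 := by
  unfold pidx; split <;> omega

lemma pidx_ne (n : ℕ) : pidx n ≠ n := by
  unfold pidx; split <;> omega

lemma pidx_pidx (n : ℕ) : pidx (pidx n) = n := by
  unfold pidx; split_ifs <;> omega

/-- Edges determined by consecutive pairing of a nodup list of even length
are pairwise equal or disjoint. -/
lemma edge_cases (l : List ℕ) (hl : l.Nodup) (hev : 2 ∣ l.length)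
    {a b : ℕ} (ha : a < l.length) (hb : b < l.length) :
    ({l.getD a 0, l.getD (pidx a) 0} : Finset ℕ) = {l.getD b 0, l.getD (pidx b) 0} ∨
    Disjoint ({l.getD a 0, l.getD (pidx a) 0} : Finset ℕ)
      {l.getD b 0, l.getD (pidx b) 0} := by
  have hpa := pidx_lt ha hev
  have hpb := pidx_lt hb hev
  by_cases h : a / 2 = b / 2
  · left
    by_cases hab : a = b
    · rw [hab]
    · have hb' : b = pidx a := by unfold pidx; split_ifs <;> omega
      rw [hb', pidx_pidx, Finset.pair_comm]
  · right
    rw [Finset.disjoint_left]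
    intro x hx hx'
    simp only [Finset.mem_insert, Finset.mem_singleton] at hx hx'
    have key : ∀ c d : ℕ, c < l.length → d < l.length →
        l.getD c 0 = l.getD d 0 → c = d := by
      intro c d hc hd hcd
      rw [List.getD_eq_getElem _ _ hc, List.getD_eq_getElem _ _ hd] at hcd
      exact (List.Nodup.getElem_inj_iff hl).mp hcd
    have h1 := pidx_div a
    have h2 := pidx_div b
    rcases hx with rfl | rfl <;> rcases hx' with h' | h'
    · have := key _ _ ha hb h'; omega
    · have := key _ _ ha hpb h'; omega
    · have := key _ _ hpa hb h'; omega
    · have := key _ _ hpa hpb h'; omega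

lemma main_assignment (N : ℕ) (hN5 : 5 ≤ N) (SA : Finset ℕ)
    (hsub : SA ⊆ Finset.Icc 1 N) (hcard : SA.card ≤ N - 3) :
    HasClassicalAssignment N SA (Finset.Icc 1 N) := by
  classical
  -- Enlarge `SA` to a set `T` of even cardinality with `T.card ≤ N - 2`.
  obtain ⟨T, hT1, hT2, hT3, hT4⟩ :
      ∃ T : Finset ℕ, SA ⊆ T ∧ T ⊆ Finset.Icc 1 N ∧ 2 ∣ T.card ∧ T.card ≤ N - 2 := by
    by_cases h : 2 ∣ SA.card
    · exact ⟨SA, subset_rfl, hsub, h, by omega⟩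
    · have hne : (Finset.Icc 1 N \ SA).Nonempty := by
        rw [← Finset.card_pos, Finset.card_sdiff_of_subset hsub, Nat.card_Icc]; omega
      obtain ⟨t, ht⟩ := hne
      rw [Finset.mem_sdiff] at ht
      refine ⟨insert t SA, Finset.subset_insert _ _,
        Finset.insert_subset ht.1 hsub, ?_, ?_⟩ <;>
        rw [Finset.card_insert_of_notMem ht.2] <;> omega
  -- two elements outside `T`
  have hClt : 1 < (Finset.Icc 1 N \ T).card := by
    rw [Finset.card_sdiff_of_subset hT2, Nat.card_Icc]; omega
  obtain ⟨u, hu, v, hv, huv⟩ := Finset.one_lt_card.mp hClt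
  rw [Finset.mem_sdiff] at hu hv
  -- the sorted list of `T`
  set l : List ℕ := T.sort (· ≤ ·) with hldef
  have hnd : l.Nodup := T.sort_nodup _
  have hlen : l.length = T.card := T.length_sort _
  have hev : 2 ∣ l.length := by rw [hlen]; exact hT3
  have hmem : ∀ x, x ∈ l ↔ x ∈ T := fun x => T.mem_sort _
  have hidx : ∀ k ∈ T, l.idxOf k < l.length := by
    intro k hk
    exact List.idxOf_lt_length_iff.mpr ((hmem k).mpr hk)
  -- the edge assigned to a line of `T`
  set eg : ℕ → Finset ℕ :=
    fun k => {l.getD (l.idxOf k) 0, l.getD (pidx (l.idxOf k)) 0} with hegdef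
  have hget : ∀ k ∈ T, l.getD (l.idxOf k) 0 = k := by
    intro k hk
    rw [List.getD_eq_getElem _ _ (hidx k hk)]
    exact List.getElem_idxOf (hidx k hk)
  have hsubT : ∀ k ∈ T, ∀ x ∈ eg k, x ∈ T := by
    intro k hk x hx
    simp only [hegdef, Finset.mem_insert, Finset.mem_singleton] at hx
    rcases hx with rfl | rfl
    · rw [List.getD_eq_getElem _ _ (hidx k hk)]
      exact (hmem _).mp (List.getElem_mem _)
    · rw [List.getD_eq_getElem _ _ (pidx_lt (hidx k hk) hev)]
      exact (hmem _).mp (List.getElem_mem _)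
  -- the global assignment
  set G : ℕ → Finset ℕ :=
    fun k => if k ∈ T then eg k else if k = u then {u, v} else {k, u} with hGdef
  have hpointT : ∀ k ∈ T, PointOn N k (eg k) := by
    intro k hk
    refine ⟨l.getD (pidx (l.idxOf k)) 0, ?_, ?_, ?_⟩
    · exact hT2 (hsubT k hk _ (by simp [hegdef]))
    · intro hcontra
      have h1 : l.getD (pidx (l.idxOf k)) 0 = l.getD (l.idxOf k) 0 := by
        rw [hget k hk, hcontra]
      rw [List.getD_eq_getElem _ _ (pidx_lt (hidx k hk) hev),
        List.getD_eq_getElem _ _ (hidx k hk)] at h1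
      exact pidx_ne (l.idxOf k) ((List.Nodup.getElem_inj_iff hnd).mp h1)
    · rw [hegdef]; simp only; rw [hget k hk]
  have hpoint : ∀ k ∈ Finset.Icc 1 N, PointOn N k (G k) := by
    intro k hk
    rw [hGdef]; simp only
    by_cases h1 : k ∈ T
    · rw [if_pos h1]; exact hpointT k h1
    · rw [if_neg h1]
      by_cases h2 : k = u
      · rw [if_pos h2, h2]
        exact ⟨v, hv.1, fun hc => huv hc.symm, rfl⟩
      · rw [if_neg h2]
        exact ⟨u, hu.1, fun hc => h2 hc.symm, rfl⟩
  refine ⟨G, G, fun i hi => hpoint i (hsub hi), hpoint, ?_⟩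
  intro i hi k hk
  have hiT : i ∈ T := hT1 hi
  rw [hGdef]; simp only [if_pos hiT]
  by_cases h1 : k ∈ T
  · rw [if_pos h1]
    exact edge_cases l hnd hev (hidx i hiT) (hidx k h1)
  · right
    rw [if_neg h1, Finset.disjoint_right]
    intro x hx
    have hxnT : x ∉ T := by
      by_cases h2 : k = u
      · rw [if_pos h2] at hx
        simp only [Finset.mem_insert, Finset.mem_singleton] at hx
        rcases hx with rfl | rfl
        · exact hu.2
        · exact hv.2
      · rw [if_neg h2] at hx
        simp only [Finset.mem_insert, Finset.mem_singleton] at hx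
        rcases hx with rfl | rfl
        · exact h1
        · exact hu.2
    exact fun hc => hxnT (hsubT i hiT x hc)

/-- For `N` odd (`N ≥ 5`): if `SA` consists of at most `N-3` of the `N` bases
and `SB` consists of all `N` bases, then a classical assignment for `(SA, SB)`
exists; hence any bipartite KS set `(SA, SB)` (a pair admitting no classical
assignment) satisfies `min(|SA|, |SB|) ≥ N-2`. -/
theorem classical_assignment_small_SA (N : ℕ) (hN : Odd N) (hN5 : 5 ≤ N) :
    (∀ SA : Finset ℕ, SA ⊆ Finset.Icc 1 N → SA.card ≤ N - 3 →
      HasClassicalAssignment N SA (Finset.Icc 1 N)) ∧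
    (∀ SA SB : Finset ℕ, SA ⊆ Finset.Icc 1 N → SB ⊆ Finset.Icc 1 N →
      ¬ HasClassicalAssignment N SA SB →
      N - 2 ≤ min SA.card SB.card) := by
  constructor
  · exact fun SA h1 h2 => main_assignment N hN5 SA h1 h2
  · intro SA SB hA hB hnot
    by_contra hlt
    push_neg at hlt
    apply hnot
    rcases le_or_gt SA.card SB.card with hc | hc
    · rw [min_eq_left hc] at hlt
      obtain ⟨F, G, h1, h2, h3⟩ := main_assignment N hN5 SA hA (by omega)
      exact ⟨F, G, h1, fun k hk => h2 k (hB hk), fun i hi k hk => h3 i hi k (hB hk)⟩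
    · rw [min_eq_right hc.le] at hlt
      obtain ⟨F, G, h1, h2, h3⟩ := main_assignment N hN5 SB hB (by omega)
      refine ⟨G, F, fun i hi => h2 i (hA hi), h1, fun i hi k hk => ?_⟩
      rcases h3 k hk i (hA hi) with h | h
      · exact Or.inl h.symm
      · exact Or.inr h.symm
end

section
/- In the non-colored odd-star line-line game on the J(N,2)-configuration (N odd, N ≥ 5), where both Alice and Bob may receive any of the N lines as input and must each output a point on their line, winning iff the chosen points are equal or disjoint as 2-subsets: every classical deterministic strategy loses on at least 4 of the N² input pairs, and there is a strategy losing on exactly 4 input pairs. -/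
open Finset

def LossP (f g : ℕ → ℕ) (x y : ℕ) : Prop :=
  ¬(({x, f x} : Finset ℕ) = {y, g y} ∨ Disjoint ({x, f x} : Finset ℕ) ({y, g y} : Finset ℕ))

instance (f g : ℕ → ℕ) (x y : ℕ) : Decidable (LossP f g x y) := by
  unfold LossP; infer_instance

/-- `a` together with `g a` forms an isolated `g`-pair inside `V`. -/
def IsoP (g : ℕ → ℕ) (V : Finset ℕ) (a : ℕ) : Prop :=
  g (g a) = a ∧ ∀ y ∈ V, y ≠ a → y ≠ g a → g y ≠ a ∧ g y ≠ g a

instance (g : ℕ → ℕ) (V : Finset ℕ) (a : ℕ) : Decidable (IsoP g V a) := by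
  unfold IsoP; infer_instance

lemma finset_pair_eq' {α : Type*} [DecidableEq α] {a b c d : α} :
    ({a, b} : Finset α) = {c, d} ↔ (a = c ∧ b = d) ∨ (a = d ∧ b = c) := by
  constructor
  · intro h
    have ha : a ∈ ({c, d} : Finset α) := by rw [← h]; simp
    have hb : b ∈ ({c, d} : Finset α) := by rw [← h]; simp
    have hc : c ∈ ({a, b} : Finset α) := by rw [h]; simp
    have hd : d ∈ ({a, b} : Finset α) := by rw [h]; simp
    simp only [mem_insert, mem_singleton] at ha hb hc hd
    rcases ha with rfl | rfl <;> rcases hb with rfl | rfl <;> tauto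
  · rintro (⟨rfl, rfl⟩ | ⟨rfl, rfl⟩)
    · rfl
    · exact Finset.pair_comm a b

lemma lossP_iff (f g : ℕ → ℕ) (x y : ℕ) :
    LossP f g x y ↔ ((x = y ∨ x = g y ∨ f x = y ∨ f x = g y) ∧
      ¬(x = y ∧ f x = g y) ∧ ¬(x = g y ∧ f x = y)) := by
  unfold LossP
  rw [not_or, finset_pair_eq', Finset.not_disjoint_iff]
  constructor
  · rintro ⟨hne, w, hw1, hw2⟩
    simp only [mem_insert, mem_singleton] at hw1 hw2
    push_neg at hne
    constructor
    · omega
    · omega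
  · rintro ⟨h1, h2, h3⟩
    refine ⟨by omega, ?_⟩
    rcases h1 with h | h | h | h
    · exact ⟨x, by simp, by simp [h]⟩
    · exact ⟨x, by simp, by simp [h]⟩
    · exact ⟨y, by simp [← h], by simp⟩
    · exact ⟨f x, by simp, by simp [h]⟩

lemma lossP_symm {f g : ℕ → ℕ} {x y : ℕ} (h : LossP f g x y) : LossP g f y x := by
  unfold LossP at *
  rw [not_or] at *
  exact ⟨fun e => h.1 e.symm, fun d => h.2 (disjoint_comm.mp d)⟩


lemma even_card_of_involution (s : Finset ℕ) (g : ℕ → ℕ)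
    (h : ∀ v ∈ s, g v ∈ s ∧ g v ≠ v ∧ g (g v) = v) : Even s.card := by
  induction s using Finset.strongInduction with
  | _ s ih =>
    rcases s.eq_empty_or_nonempty with rfl | ⟨a, ha⟩
    · simp
    · have hga := h a ha
      have hss : s \ {a, g a} ⊂ s := by
        refine Finset.sdiff_ssubset ?_ (by simp)
        intro x hx
        simp only [mem_insert, mem_singleton] at hx
        rcases hx with rfl | rfl
        · exact ha
        · exact hga.1
      have hcard : (s \ {a, g a}).card = s.card - 2 := by
        rw [Finset.card_sdiff_of_subset]
        · congr 1
          rw [Finset.card_insert_of_notMem (by simp [Ne.symm hga.2.1]), Finset.card_singleton]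
        · intro x hx
          simp only [mem_insert, mem_singleton] at hx
          rcases hx with rfl | rfl
          · exact ha
          · exact hga.1
      have h2 : 2 ≤ s.card := by
        have : ({a, g a} : Finset ℕ) ⊆ s := by
          intro x hx
          simp only [mem_insert, mem_singleton] at hx
          rcases hx with rfl | rfl
          · exact ha
          · exact hga.1
        have := Finset.card_le_card this
        rw [Finset.card_insert_of_notMem (by simp [Ne.symm hga.2.1]), Finset.card_singleton] at this
        exact this
      have := ih (s \ {a, g a}) hss ?_
      · rw [hcard] at this
        rcases this with ⟨k, hk⟩
        exact ⟨k + 1, by omega⟩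
      · intro v hv
        rw [Finset.mem_sdiff] at hv
        obtain ⟨hvs, hvn⟩ := hv
        simp only [mem_insert, mem_singleton] at hvn
        push_neg at hvn
        have hgv := h v hvs
        refine ⟨?_, hgv.2.1, hgv.2.2⟩
        rw [Finset.mem_sdiff]
        refine ⟨hgv.1, ?_⟩
        simp only [mem_insert, mem_singleton]
        push_neg
        constructor
        · intro hgg
          apply hvn.2
          rw [← hgv.2.2, hgg]
        · intro hgg
          have : g (g v) = g (g a) := by rw [hgg]
          rw [hgv.2.2, hga.2.2] at this
          exact hvn.1 this

lemma isoP_closure {g : ℕ → ℕ} {V : Finset ℕ} {a : ℕ} (h : IsoP g V a) :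
    IsoP g V (g a) := by
  obtain ⟨h1, h2⟩ := h
  refine ⟨by rw [h1], ?_⟩
  rw [h1]
  intro y hy hyga hya
  exact (h2 y hy hya hyga).symm

lemma loss_of_not_iso {V : Finset ℕ} {f g : ℕ → ℕ} {x : ℕ}
    (hfx : f x ≠ x) (hgx : g x ≠ x)
    (hni : ¬(g x = f x ∧ IsoP g V x)) : ∃ y ∈ V ∪ {x, f x}, LossP f g x y := by
  by_cases h1 : g x = f x
  · by_cases h2 : g (g x) = x
    · -- isolation fails
      have : ¬∀ y ∈ V, y ≠ x → y ≠ g x → g y ≠ x ∧ g y ≠ g x := by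
        intro hiso; exact hni ⟨h1, h2, hiso⟩
      push_neg at this
      obtain ⟨y, hyV, hyx, hygx, hy⟩ := this
      refine ⟨y, by simp [hyV], ?_⟩
      rw [lossP_iff]
      have hcase : g y = x ∨ g y = g x := by tauto
      refine ⟨?_, fun h => hyx h.1.symm, fun h => hygx (by rw [← h.2, ← h1])⟩
      rcases hcase with h | h
      · exact Or.inr (Or.inl h.symm)
      · exact Or.inr (Or.inr (Or.inr (by rw [h, h1])))
    · -- g (g x) ≠ x : loss at (x, f x)
      refine ⟨f x, by simp, ?_⟩
      rw [lossP_iff]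
      refine ⟨Or.inr (Or.inr (Or.inl rfl)), fun h => hfx h.1.symm, fun h => ?_⟩
      apply h2
      rw [h1, ← h.1]
  · -- g x ≠ f x : loss at (x, x)
    refine ⟨x, by simp, ?_⟩
    rw [lossP_iff]
    exact ⟨Or.inl rfl, fun h => h1 h.2.symm, fun h => hfx h.2⟩

lemma no_loss_of_iso {V : Finset ℕ} {f g : ℕ → ℕ} {x : ℕ}
    (hgfx : g x = f x) (hi : IsoP g V x) :
    ∀ y ∈ V, ¬LossP f g x y := by
  intro y hyV hl
  rw [lossP_iff] at hl
  obtain ⟨hA, hB, hC⟩ := hl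
  by_cases hyx : y = x
  · subst hyx
    exact hB ⟨rfl, hgfx.symm⟩
  · by_cases hygx : y = g x
    · apply hC
      subst hygx
      exact ⟨hi.1.symm, hgfx.symm⟩
    · have := hi.2 y hyV hyx hygx
      rcases hA with h | h | h | h
      · exact hyx h.symm
      · exact this.1 (h.symm)
      · exact hygx (by rw [← h, hgfx])
      · exact this.2 (by rw [← h, hgfx])

lemma two_losses {f g : ℕ → ℕ} {x : ℕ}
    (hgx : g x ≠ x) (hinv : g (g x) = x) (hne : f x ≠ g x) :
    LossP f g x x ∧ LossP f g x (g x) := by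
  constructor
  · rw [lossP_iff]
    exact ⟨Or.inl rfl, fun h => hne h.2, fun h => hgx h.1.symm⟩
  · rw [lossP_iff]
    refine ⟨Or.inr (Or.inl hinv.symm), fun h => hgx h.1.symm, fun h => hne h.2⟩

lemma two_losses' {f g : ℕ → ℕ} {w : ℕ}
    (hfw : f w ≠ w) (hp : g (f w) ≠ w) (hpb : g (f w) ≠ f w)
    (hinv : g (g (f w)) = f w) :
    LossP f g w (f w) ∧ LossP f g w (g (f w)) := by
  constructor
  · rw [lossP_iff]
    exact ⟨Or.inr (Or.inr (Or.inl rfl)), fun h => hfw h.1.symm,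
      fun h => hp (by rw [← h.1])⟩
  · rw [lossP_iff]
    refine ⟨Or.inr (Or.inr (Or.inr hinv.symm)), fun h => hp h.1.symm,
      fun h => hpb h.2.symm⟩

lemma core3 : ∀ f g : Fin 3 → Fin 3, (∀ i, f i ≠ i) → (∀ i, g i ≠ i) →
    4 ≤ (Finset.univ.filter fun p : Fin 3 × Fin 3 =>
      ¬(({p.1, f p.1} : Finset (Fin 3)) = {p.2, g p.2} ∨
        Disjoint ({p.1, f p.1} : Finset (Fin 3)) {p.2, g p.2})).card := by decide

lemma triangle_losses {f g : ℕ → ℕ} {a b c : ℕ} (hab : a ≠ b) (hac : a ≠ c) (hbc : b ≠ c)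
    (hf : ∀ x ∈ ({a, b, c} : Finset ℕ), f x ∈ ({a, b, c} : Finset ℕ) ∧ f x ≠ x)
    (hg : ∀ x ∈ ({a, b, c} : Finset ℕ), g x ∈ ({a, b, c} : Finset ℕ) ∧ g x ≠ x) :
    4 ≤ ((({a, b, c} : Finset ℕ) ×ˢ ({a, b, c} : Finset ℕ)).filter
      (fun p => LossP f g p.1 p.2)).card := by
  set ι : Fin 3 → ℕ := fun i => if i = 0 then a else if i = 1 then b else c with hι
  have hιmem : ∀ i, ι i ∈ ({a, b, c} : Finset ℕ) := by
    intro i; fin_cases i <;> simp [hι]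
  have hιinj : Function.Injective ι := by
    intro i j h
    fin_cases i <;> fin_cases j <;> simp only [hι] at h <;>
      first
        | rfl
        | exact absurd h hab | exact absurd h hac | exact absurd h hbc
        | exact absurd h.symm hab | exact absurd h.symm hac | exact absurd h.symm hbc
        | simp at h
        | (simp at h; first
            | exact absurd h hab | exact absurd h hac | exact absurd h hbc
            | exact absurd h.symm hab | exact absurd h.symm hac | exact absurd h.symm hbc)
  set inv : ℕ → Fin 3 := fun z => if z = a then 0 else if z = b then 1 else 2 with hinv
  have hinvι : ∀ i, inv (ι i) = i := by
    intro i; fin_cases i <;> simp [hι, hinv, hab.symm, hac.symm, hbc.symm, hab, hac, hbc]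
  have hιinv : ∀ z ∈ ({a, b, c} : Finset ℕ), ι (inv z) = z := by
    intro z hz
    simp only [mem_insert, mem_singleton] at hz
    rcases hz with rfl | rfl | rfl <;> simp [hι, hinv, hab.symm, hac.symm, hbc.symm, hab, hac, hbc]
  set f' : Fin 3 → Fin 3 := fun i => inv (f (ι i)) with hf'def
  set g' : Fin 3 → Fin 3 := fun i => inv (g (ι i)) with hg'def
  have hιf' : ∀ i, ι (f' i) = f (ι i) := fun i => hιinv _ (hf _ (hιmem i)).1
  have hιg' : ∀ i, ι (g' i) = g (ι i) := fun i => hιinv _ (hg _ (hιmem i)).1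
  have hf'ne : ∀ i, f' i ≠ i := by
    intro i h
    exact (hf _ (hιmem i)).2 (by rw [← hιf' i, h])
  have hg'ne : ∀ i, g' i ≠ i := by
    intro i h
    exact (hg _ (hιmem i)).2 (by rw [← hιg' i, h])
  have key : ∀ i j : Fin 3,
      ¬(({i, f' i} : Finset (Fin 3)) = {j, g' j} ∨
        Disjoint ({i, f' i} : Finset (Fin 3)) {j, g' j}) → LossP f g (ι i) (ι j) := by
    intro i j hFin
    unfold LossP
    rintro (heq | hdis)
    · apply hFin; left
      rw [finset_pair_eq'] at heq ⊢
      rw [← hιf' i, ← hιg' j] at heq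
      rcases heq with ⟨h1, h2⟩ | ⟨h1, h2⟩
      · exact Or.inl ⟨hιinj h1, hιinj h2⟩
      · exact Or.inr ⟨hιinj h1, hιinj h2⟩
    · apply hFin; right
      rw [Finset.disjoint_left] at hdis ⊢
      intro k hk1 hk2
      have hk1' : ι k ∈ ({ι i, f (ι i)} : Finset ℕ) := by
        simp only [mem_insert, mem_singleton] at hk1 ⊢
        rcases hk1 with rfl | rfl
        · exact Or.inl rfl
        · exact Or.inr (hιf' i)
      have hk2' : ι k ∈ ({ι j, g (ι j)} : Finset ℕ) := by
        simp only [mem_insert, mem_singleton] at hk2 ⊢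
        rcases hk2 with rfl | rfl
        · exact Or.inl rfl
        · exact Or.inr (hιg' j)
      exact hdis hk1' hk2'
  have h4 := core3 f' g' hf'ne hg'ne
  set S' := Finset.univ.filter fun p : Fin 3 × Fin 3 =>
      ¬(({p.1, f' p.1} : Finset (Fin 3)) = {p.2, g' p.2} ∨
        Disjoint ({p.1, f' p.1} : Finset (Fin 3)) {p.2, g' p.2}) with hS'
  have himg : S'.image (Prod.map ι ι) ⊆
      ((({a, b, c} : Finset ℕ) ×ˢ ({a, b, c} : Finset ℕ)).filter
        (fun p => LossP f g p.1 p.2)) := by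
    intro p hp
    rw [Finset.mem_image] at hp
    obtain ⟨q, hq, rfl⟩ := hp
    rw [hS', Finset.mem_filter] at hq
    rw [Finset.mem_filter, Finset.mem_product]
    exact ⟨⟨hιmem q.1, hιmem q.2⟩, key q.1 q.2 hq.2⟩
  calc 4 ≤ S'.card := h4
    _ = (S'.image (Prod.map ι ι)).card :=
        (Finset.card_image_of_injective _ (hιinj.prodMap hιinj)).symm
    _ ≤ _ := Finset.card_le_card himg

lemma four_card {s : Finset (ℕ × ℕ)} {p1 p2 p3 p4 : ℕ × ℕ}
    (h1 : p1 ∈ s) (h2 : p2 ∈ s) (h3 : p3 ∈ s) (h4 : p4 ∈ s)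
    (d12 : p1 ≠ p2) (d13 : p1 ≠ p3) (d14 : p1 ≠ p4)
    (d23 : p2 ≠ p3) (d24 : p2 ≠ p4) (d34 : p3 ≠ p4) : 4 ≤ s.card := by
  have hsub : ({p1, p2, p3, p4} : Finset (ℕ × ℕ)) ⊆ s := by
    intro p hp
    simp only [mem_insert, mem_singleton] at hp
    rcases hp with rfl | rfl | rfl | rfl <;> assumption
  have hcard : ({p1, p2, p3, p4} : Finset (ℕ × ℕ)).card = 4 := by
    rw [card_insert_of_notMem (by simp [d12, d13, d14]),
        card_insert_of_notMem (by simp [d23, d24]),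
        card_insert_of_notMem (by simp [d34]), card_singleton]
  calc 4 = ({p1, p2, p3, p4} : Finset (ℕ × ℕ)).card := hcard.symm
    _ ≤ s.card := card_le_card hsub

lemma loss_filter_swap_card (V : Finset ℕ) (f g : ℕ → ℕ) :
    ((V ×ˢ V).filter (fun p => LossP g f p.1 p.2)).card =
      ((V ×ˢ V).filter (fun p => LossP f g p.1 p.2)).card := by
  have himg : (V ×ˢ V).filter (fun p => LossP g f p.1 p.2) =
      ((V ×ˢ V).filter (fun p => LossP f g p.1 p.2)).image Prod.swap := by
    ext ⟨x, y⟩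
    simp only [mem_filter, mem_product, mem_image, Prod.exists]
    constructor
    · rintro ⟨⟨hx, hy⟩, hl⟩
      exact ⟨y, x, ⟨⟨hy, hx⟩, lossP_symm hl⟩, rfl⟩
    · rintro ⟨a, b, ⟨⟨ha, hb⟩, hl⟩, heq⟩
      rw [Prod.swap_prod_mk, Prod.mk.injEq] at heq
      obtain ⟨rfl, rfl⟩ := heq
      exact ⟨⟨hb, ha⟩, lossP_symm hl⟩
  rw [himg, card_image_of_injective _ Prod.swap_injective]

lemma rows_analysis {N : ℕ} (hN : Odd N) {f g : ℕ → ℕ}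
    (hf : ∀ x ∈ Finset.Icc 1 N, f x ∈ Finset.Icc 1 N ∧ f x ≠ x)
    (hg : ∀ x ∈ Finset.Icc 1 N, g x ∈ Finset.Icc 1 N ∧ g x ≠ x)
    (hL : ((Finset.Icc 1 N ×ˢ Finset.Icc 1 N).filter
      (fun p => LossP f g p.1 p.2)).card ≤ 3) :
    (∃ w ∈ Finset.Icc 1 N,
      w ∉ (Finset.Icc 1 N).filter (IsoP g (Finset.Icc 1 N)) ∧
      f w ∈ Finset.Icc 1 N ∧ g (f w) ∈ Finset.Icc 1 N ∧
      w ≠ f w ∧ w ≠ g (f w) ∧ g (f w) ≠ f w ∧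
      IsoP g (Finset.Icc 1 N) (f w) ∧
      LossP f g w (f w) ∧ LossP f g w (g (f w)) ∧
      (∀ x ∈ Finset.Icc 1 N, ∀ y ∈ Finset.Icc 1 N, LossP f g x y →
        x = w ∧ (y = w ∨ y = f w ∨ y = g (f w)))) ∨
    (∃ W : Finset ℕ,
      W = Finset.Icc 1 N \ (Finset.Icc 1 N).filter (IsoP g (Finset.Icc 1 N)) ∧
      W.card = 3 ∧ (∀ x ∈ W, f x ∈ W) ∧
      (∀ x ∈ (Finset.Icc 1 N).filter (IsoP g (Finset.Icc 1 N)), f x = g x) ∧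
      (∀ x ∈ W, ∃ y ∈ Finset.Icc 1 N, LossP f g x y)) := by
  set V := Finset.Icc 1 N with hV
  set PB := V.filter (IsoP g V) with hPB
  set LS := (V ×ˢ V).filter (fun p => LossP f g p.1 p.2) with hLS
  have hrow : ∀ x ∈ V \ PB, ∃ y ∈ V, LossP f g x y := by
    intro x hx
    rw [mem_sdiff] at hx
    obtain ⟨hxV, hxPB⟩ := hx
    have hfx := hf x hxV
    have hgx := hg x hxV
    have hni : ¬(g x = f x ∧ IsoP g V x) := by
      rintro ⟨-, hi⟩; exact hxPB (mem_filter.mpr ⟨hxV, hi⟩)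
    obtain ⟨y, hy, hl⟩ := loss_of_not_iso hfx.2 hgx.2 hni
    rw [mem_union] at hy
    rcases hy with hy | hy
    · exact ⟨y, hy, hl⟩
    · simp only [mem_insert, mem_singleton] at hy
      rcases hy with hy | hy
      · exact ⟨y, by rw [hy]; exact hxV, hl⟩
      · exact ⟨y, by rw [hy]; exact hfx.1, hl⟩
  have hmemLS : ∀ {x y}, x ∈ V → y ∈ V → LossP f g x y → (x, y) ∈ LS := by
    intro x y hx hy hl; rw [hLS, mem_filter, mem_product]; exact ⟨⟨hx, hy⟩, hl⟩
  have hVPB : V \ PB ⊆ LS.image Prod.fst := by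
    intro x hx
    obtain ⟨y, hy, hl⟩ := hrow x hx
    rw [mem_image]
    exact ⟨(x, y), hmemLS (mem_sdiff.mp hx).1 hy hl, rfl⟩
  have hcard1 : (V \ PB).card ≤ 3 :=
    le_trans (card_le_card hVPB) (le_trans card_image_le hL)
  have hPBeven : Even PB.card := by
    apply even_card_of_involution PB g
    intro v hv
    rw [hPB, mem_filter] at hv
    obtain ⟨hvV, hvI⟩ := hv
    refine ⟨?_, (hg v hvV).2, hvI.1⟩
    rw [hPB, mem_filter]
    exact ⟨(hg v hvV).1, isoP_closure hvI⟩
  have hcardV : V.card = N := by rw [hV, Nat.card_Icc]; omega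
  have hPBsub : PB ⊆ V := filter_subset _ _
  have hcardsd : (V \ PB).card = N - PB.card := by rw [card_sdiff_of_subset hPBsub, hcardV]
  have hPBle : PB.card ≤ N := hcardV ▸ card_le_card hPBsub
  have hodd : (V \ PB).card = 1 ∨ (V \ PB).card = 3 := by
    obtain ⟨k, hk⟩ := hN
    obtain ⟨m, hm⟩ := hPBeven
    omega
  rcases hodd with hone | hthree
  · -- Case 1 : a unique bad row w
    left
    obtain ⟨w, hw⟩ := card_eq_one.mp hone
    have hwVPB : w ∈ V \ PB := by rw [hw]; simp
    obtain ⟨hwV, hwPB⟩ := mem_sdiff.mp hwVPB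
    have hmem : ∀ z ∈ V, z ≠ w → z ∈ PB := by
      intro z hz hzw
      by_contra hzPB
      have hzm : z ∈ V \ PB := mem_sdiff.mpr ⟨hz, hzPB⟩
      rw [hw, mem_singleton] at hzm
      exact hzw hzm
    have hfwV := hf w hwV
    have hbV : f w ∈ V := hfwV.1
    have hbw : f w ≠ w := hfwV.2
    have hbPB : f w ∈ PB := hmem _ hbV hbw
    have hbI : IsoP g V (f w) := (mem_filter.mp hbPB).2
    have hpV : g (f w) ∈ V := (hg _ hbV).1
    have hpb : g (f w) ≠ f w := (hg _ hbV).2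
    have hpPB : g (f w) ∈ PB := mem_filter.mpr ⟨hpV, isoP_closure hbI⟩
    have hpw : g (f w) ≠ w := fun h => hwPB (h ▸ hpPB)
    obtain ⟨hl1, hl2⟩ := two_losses' hbw hpw hpb hbI.1
    have hall : ∀ x ∈ V, ∀ y ∈ V, LossP f g x y →
        x = w ∧ (y = w ∨ y = f w ∨ y = g (f w)) := by
      intro x hx y hy hl
      have hxw : x = w := by
        by_contra hxw
        have hxPB : x ∈ PB := hmem x hx hxw
        have hxI : IsoP g V x := (mem_filter.mp hxPB).2
        by_cases hfg : g x = f x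
        · exact absurd hl (no_loss_of_iso hfg hxI y hy)
        · obtain ⟨hm1, hm2⟩ := two_losses (hg x hx).2 hxI.1 (fun h => hfg h.symm)
          have h4 : 4 ≤ LS.card := by
            refine four_card (hmemLS hwV hbV hl1) (hmemLS hwV hpV hl2)
              (hmemLS hx hx hm1) (hmemLS hx (hg x hx).1 hm2) ?_ ?_ ?_ ?_ ?_ ?_
            · intro h; rw [Prod.mk.injEq] at h; exact hpb h.2.symm
            · intro h; rw [Prod.mk.injEq] at h; exact hxw h.1.symm
            · intro h; rw [Prod.mk.injEq] at h; exact hxw h.1.symm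
            · intro h; rw [Prod.mk.injEq] at h; exact hxw h.1.symm
            · intro h; rw [Prod.mk.injEq] at h; exact hxw h.1.symm
            · intro h; rw [Prod.mk.injEq] at h; exact (hg x hx).2 h.2.symm
          omega
      subst hxw
      refine ⟨rfl, ?_⟩
      by_contra hy3
      push_neg at hy3
      obtain ⟨hyw, hyb, hyp⟩ := hy3
      have hyPB : y ∈ PB := hmem y hy hyw
      have hyI : IsoP g V y := (mem_filter.mp hyPB).2
      rw [lossP_iff] at hl
      obtain ⟨hA, hB, hC⟩ := hl
      rcases hA with h | h | h | h
      · exact hyw h.symm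
      · exact hwPB (mem_filter.mpr ⟨hwV, h ▸ isoP_closure hyI⟩)
      · exact hyb h.symm
      · exact (hbI.2 y hy hyb hyp).1 h.symm
    exact ⟨w, hwV, hwPB, hbV, hpV, fun h => hbw h.symm, fun h => hpw h.symm, hpb,
      hbI, hl1, hl2, hall⟩
  · -- Case 3
    right
    obtain ⟨w1, w2, w3, h12, h13, h23, hWeq⟩ := card_eq_three.mp hthree
    have hWmem : ∀ {z}, z ∈ V \ PB ↔ (z = w1 ∨ z = w2 ∨ z = w3) := by
      intro z; rw [hWeq]; simp
    refine ⟨V \ PB, rfl, hthree, ?_, ?_, fun x hx => hrow x hx⟩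
    · -- f maps W into W
      intro x hx
      obtain ⟨hxV, hxPB⟩ := mem_sdiff.mp hx
      rw [mem_sdiff]
      refine ⟨(hf x hxV).1, ?_⟩
      intro hfxPB
      have hbI : IsoP g V (f x) := (mem_filter.mp hfxPB).2
      have hpPB : g (f x) ∈ PB :=
        mem_filter.mpr ⟨(hg _ (hf x hxV).1).1, isoP_closure hbI⟩
      obtain ⟨hl1, hl2⟩ := two_losses' (hf x hxV).2
        (fun h => hxPB (h ▸ hpPB)) (hg _ (hf x hxV).1).2 hbI.1
      obtain ⟨u, v, huv, hux, hvx, huW, hvW⟩ :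
          ∃ u v, u ≠ v ∧ u ≠ x ∧ v ≠ x ∧ u ∈ V \ PB ∧ v ∈ V \ PB := by
        rcases hWmem.mp hx with rfl | rfl | rfl
        · exact ⟨w2, w3, h23, fun h => h12 h.symm, fun h => h13 h.symm,
            hWmem.mpr (Or.inr (Or.inl rfl)), hWmem.mpr (Or.inr (Or.inr rfl))⟩
        · exact ⟨w1, w3, h13, h12, fun h => h23 h.symm,
            hWmem.mpr (Or.inl rfl), hWmem.mpr (Or.inr (Or.inr rfl))⟩
        · exact ⟨w1, w2, h12, h13, h23,
            hWmem.mpr (Or.inl rfl), hWmem.mpr (Or.inr (Or.inl rfl))⟩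
      obtain ⟨yu, hyuV, hlu⟩ := hrow u huW
      obtain ⟨yv, hyvV, hlv⟩ := hrow v hvW
      have h4 : 4 ≤ LS.card := by
        refine four_card (hmemLS hxV (hf x hxV).1 hl1)
          (hmemLS hxV (hg _ (hf x hxV).1).1 hl2)
          (hmemLS (mem_sdiff.mp huW).1 hyuV hlu)
          (hmemLS (mem_sdiff.mp hvW).1 hyvV hlv) ?_ ?_ ?_ ?_ ?_ ?_
        · intro h; rw [Prod.mk.injEq] at h; exact (hg _ (hf x hxV).1).2 h.2.symm
        · intro h; rw [Prod.mk.injEq] at h; exact hux h.1.symm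
        · intro h; rw [Prod.mk.injEq] at h; exact hvx h.1.symm
        · intro h; rw [Prod.mk.injEq] at h; exact hux h.1.symm
        · intro h; rw [Prod.mk.injEq] at h; exact hvx h.1.symm
        · intro h; rw [Prod.mk.injEq] at h; exact huv h.1
      omega
    · -- f = g on PB
      intro x hxPB
      obtain ⟨hxV, hxI⟩ := mem_filter.mp hxPB
      by_contra hfg
      obtain ⟨hm1, hm2⟩ := two_losses (hg x hxV).2 hxI.1 hfg
      have hw1 : w1 ∈ V \ PB := hWmem.mpr (Or.inl rfl)
      have hw2 : w2 ∈ V \ PB := hWmem.mpr (Or.inr (Or.inl rfl))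
      obtain ⟨y1, hy1V, hl1⟩ := hrow w1 hw1
      obtain ⟨y2, hy2V, hl2⟩ := hrow w2 hw2
      have hxw1 : x ≠ w1 := fun h => (mem_sdiff.mp hw1).2 (h ▸ hxPB)
      have hxw2 : x ≠ w2 := fun h => (mem_sdiff.mp hw2).2 (h ▸ hxPB)
      have h4 : 4 ≤ LS.card := by
        refine four_card (hmemLS hxV hxV hm1) (hmemLS hxV (hg x hxV).1 hm2)
          (hmemLS (mem_sdiff.mp hw1).1 hy1V hl1)
          (hmemLS (mem_sdiff.mp hw2).1 hy2V hl2) ?_ ?_ ?_ ?_ ?_ ?_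
        · intro h; rw [Prod.mk.injEq] at h; exact (hg x hxV).2 h.2.symm
        · intro h; rw [Prod.mk.injEq] at h; exact hxw1 h.1
        · intro h; rw [Prod.mk.injEq] at h; exact hxw2 h.1
        · intro h; rw [Prod.mk.injEq] at h; exact hxw1 h.1
        · intro h; rw [Prod.mk.injEq] at h; exact hxw2 h.1
        · intro h; rw [Prod.mk.injEq] at h; exact h12 h.1
      omega

lemma comb13 {N : ℕ} {f g : ℕ → ℕ} {w : ℕ}
    (hg : ∀ x ∈ Finset.Icc 1 N, g x ∈ Finset.Icc 1 N ∧ g x ≠ x)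
    (hwV : w ∈ Finset.Icc 1 N)
    (hwb : w ≠ f w) (hwp : w ≠ g (f w)) (hpb : g (f w) ≠ f w)
    (hbI : IsoP g (Finset.Icc 1 N) (f w))
    (hall : ∀ x ∈ Finset.Icc 1 N, ∀ y ∈ Finset.Icc 1 N, LossP f g x y →
      x = w ∧ (y = w ∨ y = f w ∨ y = g (f w)))
    (hWA : (Finset.Icc 1 N \ (Finset.Icc 1 N).filter (IsoP f (Finset.Icc 1 N))).card = 3)
    (hgW : ∀ x ∈ Finset.Icc 1 N \ (Finset.Icc 1 N).filter (IsoP f (Finset.Icc 1 N)),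
      g x ∈ Finset.Icc 1 N \ (Finset.Icc 1 N).filter (IsoP f (Finset.Icc 1 N)))
    (hWloss : ∀ x ∈ Finset.Icc 1 N \ (Finset.Icc 1 N).filter (IsoP f (Finset.Icc 1 N)),
      ∃ y ∈ Finset.Icc 1 N, LossP g f x y) : False := by
  set V := Finset.Icc 1 N with hV
  set WA := V \ V.filter (IsoP f V) with hWAdef
  have hsub : WA ⊆ {w, f w, g (f w)} := by
    intro u hu
    obtain ⟨y, hy, hl⟩ := hWloss u hu
    have hl' := lossP_symm hl
    have huV : u ∈ V := (mem_sdiff.mp hu).1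
    have := hall y hy u huV hl'
    simp only [mem_insert, mem_singleton]
    exact this.2
  have hcard3 : ({w, f w, g (f w)} : Finset ℕ).card = 3 := by
    rw [card_insert_of_notMem (by simp [hwb, hwp]),
        card_insert_of_notMem (by simp only [mem_singleton]; exact fun h => hpb h.symm), card_singleton]
  have hWAeq : WA = {w, f w, g (f w)} :=
    Finset.eq_of_subset_of_card_le hsub (by rw [hcard3, hWA])
  have hwWA : w ∈ WA := by rw [hWAeq]; simp
  obtain ⟨y, hyV, hl⟩ := hWloss w hwWA
  have hl' := lossP_symm hl
  have h1 := hall y hyV w hwV hl'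
  rw [h1.1] at hl'
  have hgwfw : g w ≠ f w := by
    rw [lossP_iff] at hl'
    exact fun h => hl'.2.1 ⟨rfl, h.symm⟩
  have hgwWA := hgW w hwWA
  rw [hWAeq] at hgwWA
  simp only [mem_insert, mem_singleton] at hgwWA
  rcases hgwWA with h | h | h
  · exact (hg w hwV).2 h
  · exact hgwfw h
  · exact (hbI.2 w hwV (fun hh => hwb hh) (fun hh => hwp hh)).2 h

lemma comb33 {N : ℕ} {f g : ℕ → ℕ}
    (hf : ∀ x ∈ Finset.Icc 1 N, f x ∈ Finset.Icc 1 N ∧ f x ≠ x)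
    (hg : ∀ x ∈ Finset.Icc 1 N, g x ∈ Finset.Icc 1 N ∧ g x ≠ x)
    (hL : ((Finset.Icc 1 N ×ˢ Finset.Icc 1 N).filter
      (fun p => LossP f g p.1 p.2)).card ≤ 3)
    (hWB : (Finset.Icc 1 N \ (Finset.Icc 1 N).filter (IsoP g (Finset.Icc 1 N))).card = 3)
    (hfW : ∀ x ∈ Finset.Icc 1 N \ (Finset.Icc 1 N).filter (IsoP g (Finset.Icc 1 N)),
      f x ∈ Finset.Icc 1 N \ (Finset.Icc 1 N).filter (IsoP g (Finset.Icc 1 N)))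
    (hfgPB : ∀ x ∈ (Finset.Icc 1 N).filter (IsoP g (Finset.Icc 1 N)), f x = g x)
    (hWA : (Finset.Icc 1 N \ (Finset.Icc 1 N).filter (IsoP f (Finset.Icc 1 N))).card = 3)
    (hgW : ∀ x ∈ Finset.Icc 1 N \ (Finset.Icc 1 N).filter (IsoP f (Finset.Icc 1 N)),
      g x ∈ Finset.Icc 1 N \ (Finset.Icc 1 N).filter (IsoP f (Finset.Icc 1 N))) :
    False := by
  set V := Finset.Icc 1 N with hV
  set PB := V.filter (IsoP g V) with hPB
  set PA := V.filter (IsoP f V) with hPA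
  have hPBPA : PB ⊆ PA := by
    intro x hxPB
    obtain ⟨hxV, hxI⟩ := mem_filter.mp hxPB
    have hfgx : f x = g x := hfgPB x hxPB
    have hgxPB : g x ∈ PB := mem_filter.mpr ⟨(hg x hxV).1, isoP_closure hxI⟩
    rw [hPA, mem_filter]
    refine ⟨hxV, ?_, ?_⟩
    · rw [hfgx, hfgPB _ hgxPB, hxI.1]
    · intro z hz hzx hzfx
      rw [hfgx] at hzfx ⊢
      by_cases hzPB : z ∈ PB
      · rw [hfgPB _ hzPB]
        exact hxI.2 z hz hzx hzfx
      · have hzW : z ∈ V \ PB := mem_sdiff.mpr ⟨hz, hzPB⟩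
        have hfzW : f z ∈ V \ PB := hfW z hzW
        have hfzPB := (mem_sdiff.mp hfzW).2
        constructor
        · intro h; exact hfzPB (h ▸ hxPB)
        · intro h; exact hfzPB (h ▸ hgxPB)
  have hWAB : V \ PA ⊆ V \ PB := sdiff_subset_sdiff (Finset.Subset.refl V) hPBPA
  have hWeq : V \ PA = V \ PB :=
    Finset.eq_of_subset_of_card_le hWAB (by rw [hWA, hWB])
  obtain ⟨a, b, c, hab, hac, hbc, habc⟩ := card_eq_three.mp hWB
  have hWV : (V \ PB) ⊆ V := sdiff_subset
  have habcV : ({a, b, c} : Finset ℕ) ⊆ V := habc ▸ hWV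
  have hfW' : ∀ x ∈ ({a, b, c} : Finset ℕ), f x ∈ ({a, b, c} : Finset ℕ) ∧ f x ≠ x := by
    intro x hx
    have hxW : x ∈ V \ PB := habc ▸ hx
    exact ⟨habc ▸ hfW x hxW, (hf x (hWV hxW)).2⟩
  have hgW' : ∀ x ∈ ({a, b, c} : Finset ℕ), g x ∈ ({a, b, c} : Finset ℕ) ∧ g x ≠ x := by
    intro x hx
    have hxW : x ∈ V \ PA := by rw [hWeq, habc]; exact hx
    have := hgW x hxW
    rw [hWeq, habc] at this
    exact ⟨this, (hg x (habcV hx)).2⟩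
  have h4 := triangle_losses hab hac hbc hfW' hgW'
  have hsub : ((({a, b, c} : Finset ℕ) ×ˢ ({a, b, c} : Finset ℕ)).filter
      (fun p => LossP f g p.1 p.2)) ⊆
      ((V ×ˢ V).filter (fun p => LossP f g p.1 p.2)) :=
    Finset.filter_subset_filter _ (Finset.product_subset_product habcV habcV)
  have := le_trans h4 (card_le_card hsub)
  omega

lemma lower_bound {N : ℕ} (hN : Odd N) {f g : ℕ → ℕ}
    (hf : ∀ x ∈ Finset.Icc 1 N, f x ∈ Finset.Icc 1 N ∧ f x ≠ x)
    (hg : ∀ x ∈ Finset.Icc 1 N, g x ∈ Finset.Icc 1 N ∧ g x ≠ x) :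
    4 ≤ ((Finset.Icc 1 N ×ˢ Finset.Icc 1 N).filter
      (fun p => LossP f g p.1 p.2)).card := by
  by_contra hcon
  push_neg at hcon
  have hL : ((Finset.Icc 1 N ×ˢ Finset.Icc 1 N).filter
      (fun p => LossP f g p.1 p.2)).card ≤ 3 := by omega
  have hL' : ((Finset.Icc 1 N ×ˢ Finset.Icc 1 N).filter
      (fun p => LossP g f p.1 p.2)).card ≤ 3 := by
    rw [loss_filter_swap_card]; exact hL
  rcases rows_analysis hN hf hg hL with hA | hA <;>
    rcases rows_analysis hN hg hf hL' with hB | hB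
  · -- case (1,1)
    obtain ⟨w, hwV, -, hbV, hpV, hwb, hwp, hpb, hbI, hl1, hl2, hall⟩ := hA
    obtain ⟨u, huV, -, hcV, hqV, huc, huq, hqc, hcI, hm1, hm2, -⟩ := hB
    have e1 := (hall _ hcV u huV (lossP_symm hm1)).1
    have e2 := (hall _ hqV u huV (lossP_symm hm2)).1
    exact hqc (e2.trans e1.symm)
  · -- case (1,3)
    obtain ⟨w, hwV, -, hbV, hpV, hwb, hwp, hpb, hbI, hl1, hl2, hall⟩ := hA
    obtain ⟨WA, hWAeq, hWAcard, hgWA, -, hWAloss⟩ := hB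
    subst hWAeq
    exact comb13 hg hwV hwb hwp hpb hbI hall hWAcard hgWA hWAloss
  · -- case (3,1)
    obtain ⟨u, huV, -, hcV, hqV, huc, huq, hqc, hcI, hm1, hm2, hallB⟩ := hB
    obtain ⟨WB, hWBeq, hWBcard, hfWB, -, hWBloss⟩ := hA
    subst hWBeq
    exact comb13 hf huV huc huq hqc hcI hallB hWBcard hfWB hWBloss
  · -- case (3,3)
    obtain ⟨WB, hWBeq, hWBcard, hfWB, hfgPB, -⟩ := hA
    obtain ⟨WA, hWAeq, hWAcard, hgWA, -, -⟩ := hB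
    subst hWBeq
    subst hWAeq
    exact comb33 hf hg hL hWBcard hfWB hfgPB hWAcard hgWA

/-- The near-optimal strategy: pair partner, with line `N` mapped to `N-1`. -/
def hstrat (N : ℕ) (z : ℕ) : ℕ :=
  if z = N then N - 1 else if z % 2 = 1 then z + 1 else z - 1

set_option maxHeartbeats 2000000 in
lemma part2 (N : ℕ) (hN : Odd N) (hN5 : 5 ≤ N) :
    ∃ F G : ℕ → Finset ℕ,
      (∀ x ∈ Finset.Icc 1 N, PointOn N x (F x)) ∧
      (∀ y ∈ Finset.Icc 1 N, PointOn N y (G y)) ∧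
      ((Finset.Icc 1 N ×ˢ Finset.Icc 1 N).filter
        (fun p => ¬ (F p.1 = G p.2 ∨ Disjoint (F p.1) (G p.2)))).card = 4 := by
  have hN2 : N % 2 = 1 := Nat.odd_iff.mp hN
  refine ⟨fun x => {x, hstrat N x}, fun x => {x, hstrat N x}, ?_, ?_, ?_⟩
  · intro x hx
    rw [mem_Icc] at hx
    refine ⟨hstrat N x, ?_, ?_, rfl⟩
    · rw [mem_Icc]; unfold hstrat; split_ifs <;> omega
    · unfold hstrat; split_ifs <;> omega
  · intro x hx
    rw [mem_Icc] at hx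
    refine ⟨hstrat N x, ?_, ?_, rfl⟩
    · rw [mem_Icc]; unfold hstrat; split_ifs <;> omega
    · unfold hstrat; split_ifs <;> omega
  · have key : ((Finset.Icc 1 N ×ˢ Finset.Icc 1 N).filter
        (fun p : ℕ × ℕ => ¬ (({p.1, hstrat N p.1} : Finset ℕ) = {p.2, hstrat N p.2} ∨
          Disjoint ({p.1, hstrat N p.1} : Finset ℕ) {p.2, hstrat N p.2}))) =
        {(N-2, N), (N-1, N), (N, N-2), (N, N-1)} := by
      ext ⟨x, y⟩
      rw [Finset.mem_filter, Finset.mem_product]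
      simp only [mem_insert, mem_singleton, Prod.mk.injEq]
      constructor
      · rintro ⟨⟨hx, hy⟩, hl⟩
        have hl' : LossP (hstrat N) (hstrat N) x y := hl
        rw [lossP_iff] at hl'
        rw [mem_Icc] at hx hy
        revert hl'
        unfold hstrat
        split_ifs <;> omega
      · intro hmem
        have hx : x ∈ Finset.Icc 1 N := by rw [mem_Icc]; omega
        have hy : y ∈ Finset.Icc 1 N := by rw [mem_Icc]; omega
        refine ⟨⟨hx, hy⟩, ?_⟩
        show LossP (hstrat N) (hstrat N) x y
        rw [lossP_iff]
        unfold hstrat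
        split_ifs <;> omega
    rw [key]
    rw [card_insert_of_notMem (by simp only [mem_insert, mem_singleton, Prod.mk.injEq]; omega),
        card_insert_of_notMem (by simp only [mem_insert, mem_singleton, Prod.mk.injEq]; omega),
        card_insert_of_notMem (by simp only [mem_singleton, Prod.mk.injEq]; omega),
        card_singleton]


/-- In the non-colored odd-star line-line game on the `J(N,2)`-configuration
(`N` odd, `N ≥ 5`), where both players may receive any of the `N` lines and
output a point on their line, winning iff the two points are equal or disjoint:
every classical deterministic strategy loses on at least `4` of the `N²` input
pairs, and some strategy loses on exactly `4` input pairs. -/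
theorem line_line_game_optimal (N : ℕ) (hN : Odd N) (hN5 : 5 ≤ N) :
    (∀ F G : ℕ → Finset ℕ,
      (∀ x ∈ Finset.Icc 1 N, PointOn N x (F x)) →
      (∀ y ∈ Finset.Icc 1 N, PointOn N y (G y)) →
      4 ≤ ((Finset.Icc 1 N ×ˢ Finset.Icc 1 N).filter
        (fun p => ¬ (F p.1 = G p.2 ∨ Disjoint (F p.1) (G p.2)))).card) ∧
    (∃ F G : ℕ → Finset ℕ,
      (∀ x ∈ Finset.Icc 1 N, PointOn N x (F x)) ∧
      (∀ y ∈ Finset.Icc 1 N, PointOn N y (G y)) ∧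
      ((Finset.Icc 1 N ×ˢ Finset.Icc 1 N).filter
        (fun p => ¬ (F p.1 = G p.2 ∨ Disjoint (F p.1) (G p.2)))).card = 4) := by
  constructor
  · intro F G hF hG
    have hf' : ∀ x, ∃ j, x ∈ Finset.Icc 1 N →
        j ∈ Finset.Icc 1 N ∧ j ≠ x ∧ F x = {x, j} := by
      intro x
      by_cases hx : x ∈ Finset.Icc 1 N
      · obtain ⟨j, hj1, hj2, hj3⟩ := hF x hx
        exact ⟨j, fun _ => ⟨hj1, hj2, hj3⟩⟩
      · exact ⟨0, fun h => absurd h hx⟩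
    have hg' : ∀ x, ∃ j, x ∈ Finset.Icc 1 N →
        j ∈ Finset.Icc 1 N ∧ j ≠ x ∧ G x = {x, j} := by
      intro x
      by_cases hx : x ∈ Finset.Icc 1 N
      · obtain ⟨j, hj1, hj2, hj3⟩ := hG x hx
        exact ⟨j, fun _ => ⟨hj1, hj2, hj3⟩⟩
      · exact ⟨0, fun h => absurd h hx⟩
    choose f hf using hf'
    choose g hg using hg'
    have hfok : ∀ x ∈ Finset.Icc 1 N, f x ∈ Finset.Icc 1 N ∧ f x ≠ x :=
      fun x hx => ⟨(hf x hx).1, (hf x hx).2.1⟩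
    have hgok : ∀ x ∈ Finset.Icc 1 N, g x ∈ Finset.Icc 1 N ∧ g x ≠ x :=
      fun x hx => ⟨(hg x hx).1, (hg x hx).2.1⟩
    have hfilter : ((Finset.Icc 1 N ×ˢ Finset.Icc 1 N).filter
        (fun p => ¬ (F p.1 = G p.2 ∨ Disjoint (F p.1) (G p.2)))) =
        ((Finset.Icc 1 N ×ˢ Finset.Icc 1 N).filter
          (fun p => LossP f g p.1 p.2)) := by
      apply Finset.filter_congr
      intro p hp
      rw [Finset.mem_product] at hp
      unfold LossP
      rw [(hf p.1 hp.1).2.2, (hg p.2 hp.2).2.2]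
    rw [hfilter]
    exact lower_bound hN hfok hgok
  · exact part2 N hN hN5
end

section
/- In the non-colored odd-star point-line game on the J(N,2)-configuration (N odd, N ≥ 5), where Alice receives a line and outputs one of its N−1 points (labeling it 1 and the rest 0) and Bob receives a point on Alice's line and outputs a bit, winning iff Bob's bit equals Alice's label of his point: there is no perfect classical strategy, and there is a classical strategy winning on all but exactly one of the N(N−1) input pairs. -/
lemma fpair_eq {a b c d : ℕ} :
    ({a, b} : Finset ℕ) = {c, d} ↔ a = c ∧ b = d ∨ a = d ∧ b = c := by
  rw [← Finset.coe_inj]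
  push_cast
  exact Set.pair_eq_pair_iff

/-- the matching partner of `x` among `1..N-1`. -/
def mate (x : ℕ) : ℕ := if x % 2 = 1 then x + 1 else x - 1

lemma mate_ne {x : ℕ} (hx : 1 ≤ x) : mate x ≠ x := by
  unfold mate; split <;> omega

lemma mate_mate {x : ℕ} (hx : 1 ≤ x) : mate (mate x) = x := by
  unfold mate
  rcases Nat.even_or_odd x with h | h
  · rw [Nat.even_iff] at h
    rw [if_neg (by omega : ¬ x % 2 = 1), if_pos (by omega : (x - 1) % 2 = 1)]
    omega
  · rw [Nat.odd_iff] at h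
    rw [if_pos h, if_neg (by omega : ¬ (x + 1) % 2 = 1)]
    omega

lemma mate_mem {N x : ℕ} (hN : Odd N) (hx : x ∈ Finset.Icc 1 (N - 1)) :
    mate x ∈ Finset.Icc 1 (N - 1) := by
  rw [Finset.mem_Icc] at *
  rw [Nat.odd_iff] at hN
  unfold mate; split <;> omega

/-- In the non-colored odd-star point-line game on the `J(N,2)`-configuration
(`N` odd, `N ≥ 5`): Alice receives a line `x` and selects a point `F x` on it
(labeling it `1` and the rest `0`), Bob receives a point `{x,j}` on Alice's
line and outputs a bit `G {x,j}`; they win iff Bob's bit equals Alice's label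
of his point.  There is no perfect classical strategy, and there is a strategy
losing on exactly one of the `N(N-1)` input pairs. -/
theorem point_line_game (N : ℕ) (hN : Odd N) (hN5 : 5 ≤ N) :
    (¬ ∃ (F : ℕ → Finset ℕ) (G : Finset ℕ → Bool),
      (∀ x ∈ Finset.Icc 1 N, PointOn N x (F x)) ∧
      (∀ x ∈ Finset.Icc 1 N, ∀ j ∈ Finset.Icc 1 N, j ≠ x →
        (G {x, j} = true ↔ ({x, j} : Finset ℕ) = F x))) ∧
    (∃ (F : ℕ → Finset ℕ) (G : Finset ℕ → Bool),
      (∀ x ∈ Finset.Icc 1 N, PointOn N x (F x)) ∧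
      ((Finset.Icc 1 N ×ˢ Finset.Icc 1 N).filter
        (fun p => p.2 ≠ p.1 ∧
          ¬ (G {p.1, p.2} = true ↔ ({p.1, p.2} : Finset ℕ) = F p.1))).card = 1) := by
  constructor
  · -- no perfect strategy
    rintro ⟨F, G, hF, hG⟩
    classical
    set f : ℕ → ℕ := fun x => if h : PointOn N x (F x) then h.choose else 0 with hf
    have hfspec : ∀ x ∈ Finset.Icc 1 N,
        f x ∈ Finset.Icc 1 N ∧ f x ≠ x ∧ F x = {x, f x} := by
      intro x hx
      have h := hF x hx
      simp only [hf, dif_pos h]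
      exact ⟨h.choose_spec.1, h.choose_spec.2.1, h.choose_spec.2.2⟩
    have hinv : ∀ x ∈ Finset.Icc 1 N, f (f x) = x := by
      intro x hx
      obtain ⟨hm, hne, hFx⟩ := hfspec x hx
      obtain ⟨hm2, hne2, hFx2⟩ := hfspec (f x) hm
      have h2 : ({f x, x} : Finset ℕ) = F (f x) := by
        refine (hG (f x) hm x hx (Ne.symm hne)).mp ?_
        rw [Finset.pair_comm]
        exact (hG x hx (f x) hm hne).mpr hFx.symm
      rw [hFx2] at h2
      rcases fpair_eq.mp h2 with ⟨_, h⟩ | ⟨_, h⟩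
      · exact h.symm
      · exact absurd h.symm hne
    have hsum : (∑ _x ∈ Finset.Icc 1 N, (1 : ZMod 2)) = 0 := by
      refine Finset.sum_involution (fun a _ => f a) (fun a ha => by decide)
        (fun a ha _ => (hfspec a ha).2.1) (fun a ha => (hfspec a ha).1)
        (fun a ha => hinv a ha)
    rw [Finset.sum_const, Nat.card_Icc, nsmul_eq_mul, mul_one,
      ZMod.natCast_eq_zero_iff] at hsum
    rw [Nat.odd_iff] at hN
    omega
  · -- near-perfect strategy
    classical
    refine ⟨fun x => if x = N then {N, 1} else {x, mate x},
      fun p => decide (∃ y ∈ Finset.Icc 1 (N - 1), p = {y, mate y}), ?_, ?_⟩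
    · intro x hx
      rw [Finset.mem_Icc] at hx
      by_cases h : x = N
      · exact ⟨1, Finset.mem_Icc.mpr ⟨le_refl 1, by omega⟩, by omega, by simp [h]⟩
      · have hmem := mate_mem hN (Finset.mem_Icc.mpr (⟨by omega, by omega⟩ : 1 ≤ x ∧ x ≤ N - 1))
        rw [Finset.mem_Icc] at hmem
        exact ⟨mate x, Finset.mem_Icc.mpr ⟨hmem.1, by omega⟩, mate_ne (by omega), by simp [h]⟩
    · have hGN : ∀ j, ¬ ∃ y, (1 ≤ y ∧ y ≤ N - 1) ∧ ({N, j} : Finset ℕ) = {y, mate y} := by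
        rintro j ⟨y, hy', hpair⟩
        have hmy := Finset.mem_Icc.mp (mate_mem hN (Finset.mem_Icc.mpr hy'))
        rcases fpair_eq.mp hpair with ⟨h, _⟩ | ⟨h, _⟩ <;> omega
      have key : (Finset.Icc 1 N ×ˢ Finset.Icc 1 N).filter
          (fun p => p.2 ≠ p.1 ∧
            ¬ ((decide (∃ y ∈ Finset.Icc 1 (N - 1), ({p.1, p.2} : Finset ℕ) = {y, mate y}) = true) ↔
              ({p.1, p.2} : Finset ℕ) =
                if p.1 = N then {N, 1} else {p.1, mate p.1})) = {(N, 1)} := by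
        ext ⟨x, j⟩
        simp only [Finset.mem_filter, Finset.mem_product, Finset.mem_Icc, Finset.mem_singleton,
          Prod.mk.injEq, decide_eq_true_eq]
        constructor
        · rintro ⟨⟨hx, hj⟩, hne, hlose⟩
          by_cases h : x = N
          · subst h
            refine ⟨rfl, ?_⟩
            simp only [if_pos rfl] at hlose
            have hG := hGN j
            have hp : ({x, j} : Finset ℕ) = {x, 1} := by
              by_contra hc
              exact hlose ⟨fun hh => absurd hh hG, fun hh => absurd hh hc⟩
            rcases fpair_eq.mp hp with ⟨h1, h2⟩ | ⟨h1, h2⟩ <;> omega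
          · exfalso
            simp only [if_neg h] at hlose
            apply hlose
            have hx1 : 1 ≤ x := hx.1
            constructor
            · rintro ⟨y, hy, hpair⟩
              rcases fpair_eq.mp hpair with ⟨h1, h2⟩ | ⟨h1, h2⟩
              · subst h1; rw [h2]
              · rw [h2, h1, mate_mate hy.1]
            · intro hpair
              rcases fpair_eq.mp hpair with ⟨_, h2⟩ | ⟨h1, _⟩
              · exact ⟨x, ⟨hx1, by omega⟩, by rw [h2]⟩
              · exact absurd h1.symm (mate_ne hx1)
        · rintro ⟨rfl, rfl⟩
          refine ⟨⟨⟨by omega, by omega⟩, by omega, by omega⟩, by omega, ?_⟩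
          simp only [if_pos rfl]
          intro hiff
          exact hGN 1 (hiff.mpr rfl)
      rw [key, Finset.card_singleton]
end
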